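/- arXiv:2202.02770 — 3 statements merged into one kernel-verified Lean document; each statement's English description precedes it below -/
import Mathlib

section
/- For every hypergraph H and every positive integer k, H has a proper incidence k-coloring if and only if the Levi graph B(H) has a strong edge k-coloring. Consequently χ_I(H) = χ'_s(B(H)). -/
structure Hypergraph' (V : Type*) where
  verts : Finset V
  edges : Finset (Finset V)
  edge_sub : ∀ s ∈ edges, s ⊆ verts
  edge_nonempty : ∀ s ∈ edges, s.Nonempty

namespace Hypergraph'

variable {V : Type*} [DecidableEq V]

def degree (H : Hypergraph' V) (x : V) : ℕ :=
  (H.edges.filter fun s => x ∈ s).card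

def maxDegree (H : Hypergraph' V) : ℕ :=
  H.verts.sup H.degree

def rank (H : Hypergraph' V) : ℕ :=
  H.edges.sup Finset.card

def IsIncidence (H : Hypergraph' V) (p : V × Finset V) : Prop :=
  p.2 ∈ H.edges ∧ p.1 ∈ p.2

def IncAdj (p q : V × Finset V) : Prop :=
  p ≠ q ∧ (p.1 = q.1 ∨ ({p.1, q.1} : Finset V) ⊆ p.2 ∨ ({p.1, q.1} : Finset V) ⊆ q.2)

def HasIncidenceColoring (H : Hypergraph' V) (k : ℕ) : Prop :=
  ∃ φ : V × Finset V → ℕ,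
    (∀ p, H.IsIncidence p → φ p < k) ∧
    (∀ p q, H.IsIncidence p → H.IsIncidence q → IncAdj p q → φ p ≠ φ q)

noncomputable def incChromaticNumber (H : Hypergraph' V) : ℕ :=
  sInf {k | H.HasIncidenceColoring k}

def Levi (H : Hypergraph' V) : SimpleGraph (V ⊕ Finset V) where
  Adj a b :=
    match a, b with
    | Sum.inl x, Sum.inr s => s ∈ H.edges ∧ x ∈ s
    | Sum.inr s, Sum.inl x => s ∈ H.edges ∧ x ∈ s
    | _, _ => False
  symm := by
    exact ⟨by rintro (x | s) (y | t) h <;> exact h⟩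
  loopless := by
    exact ⟨by rintro (x | s) h <;> exact h⟩

end Hypergraph'

def StrongAdj {α : Type*} (G : SimpleGraph α) (e₁ e₂ : Sym2 α) : Prop :=
  e₁ ≠ e₂ ∧ ∃ u v, u ∈ e₁ ∧ v ∈ e₂ ∧ (u = v ∨ G.Adj u v)

def HasStrongEdgeColoring {α : Type*} (G : SimpleGraph α) (k : ℕ) : Prop :=
  ∃ φ : Sym2 α → ℕ,
    (∀ e ∈ G.edgeSet, φ e < k) ∧
    (∀ e₁ ∈ G.edgeSet, ∀ e₂ ∈ G.edgeSet, StrongAdj G e₁ e₂ → φ e₁ ≠ φ e₂)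

noncomputable def strongChromaticIndex {α : Type*} (G : SimpleGraph α) : ℕ :=
  sInf {k | HasStrongEdgeColoring G k}


section Aux

variable {V : Type*} [DecidableEq V]

open Hypergraph'

def mkEdge (p : V × Finset V) : Sym2 (V ⊕ Finset V) := s(Sum.inl p.1, Sum.inr p.2)

lemma mkEdge_inj {p q : V × Finset V} (h : mkEdge p = mkEdge q) : p = q := by
  rw [mkEdge, mkEdge, Sym2.eq_iff] at h
  rcases h with ⟨h1, h2⟩ | ⟨h1, h2⟩
  · exact Prod.ext (Sum.inl.inj h1) (Sum.inr.inj h2)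
  · exact absurd h1 (by simp)

lemma adj_iff (H : Hypergraph' V) (x : V) (s : Finset V) :
    H.Levi.Adj (Sum.inl x) (Sum.inr s) ↔ s ∈ H.edges ∧ x ∈ s := Iff.rfl

lemma adj_iff' (H : Hypergraph' V) (x : V) (s : Finset V) :
    H.Levi.Adj (Sum.inr s) (Sum.inl x) ↔ s ∈ H.edges ∧ x ∈ s := Iff.rfl

lemma mem_edgeSet_iff (H : Hypergraph' V) (e : Sym2 (V ⊕ Finset V)) :
    e ∈ H.Levi.edgeSet ↔ ∃ p, H.IsIncidence p ∧ e = mkEdge p := by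
  induction e using Sym2.inductionOn with
  | hf a b =>
    constructor
    · intro h
      rw [SimpleGraph.mem_edgeSet] at h
      match a, b, h with
      | Sum.inl x, Sum.inr s, h => exact ⟨(x, s), h, rfl⟩
      | Sum.inr s, Sum.inl x, h => exact ⟨(x, s), h, Sym2.eq_swap⟩
    · rintro ⟨⟨x, s⟩, hp, he⟩
      rw [SimpleGraph.mem_edgeSet]
      rw [mkEdge, Sym2.eq_iff] at he
      rcases he with ⟨rfl, rfl⟩ | ⟨rfl, rfl⟩
      · exact hp
      · exact hp

lemma mkEdge_mem (H : Hypergraph' V) {p : V × Finset V} (hp : H.IsIncidence p) :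
    mkEdge p ∈ H.Levi.edgeSet := (mem_edgeSet_iff H _).mpr ⟨p, hp, rfl⟩

lemma strongAdj_iff (H : Hypergraph' V) {p q : V × Finset V}
    (hp : H.IsIncidence p) (hq : H.IsIncidence q) :
    StrongAdj H.Levi (mkEdge p) (mkEdge q) ↔ IncAdj p q := by
  obtain ⟨x, s⟩ := p
  obtain ⟨y, t⟩ := q
  obtain ⟨hsE, hxs⟩ := hp
  obtain ⟨htE, hyt⟩ := hq
  constructor
  · rintro ⟨hne, u, v, hu, hv, huv⟩
    refine ⟨fun h => hne (by rw [h]), ?_⟩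
    rw [mkEdge, Sym2.mem_iff] at hu hv
    rcases hu with rfl | rfl <;> rcases hv with rfl | rfl
    · rcases huv with h | h
      · exact Or.inl (Sum.inl.inj h)
      · exact absurd h (by simp [Hypergraph'.Levi])
    · rcases huv with h | h
      · exact absurd h (by simp)
      · exact Or.inr (Or.inr (Finset.insert_subset h.2 (by simpa using hyt)))
    · rcases huv with h | h
      · exact absurd h (by simp)
      · exact Or.inr (Or.inl (Finset.insert_subset hxs (by simpa using h.2)))
    · rcases huv with h | h
      · obtain rfl := Sum.inr.inj h
        exact Or.inr (Or.inl (Finset.insert_subset hxs (by simpa using hyt)))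
      · exact absurd h (by simp [Hypergraph'.Levi])
  · rintro ⟨hne, h⟩
    refine ⟨fun he => hne (mkEdge_inj he), ?_⟩
    rcases h with rfl | h | h
    · exact ⟨Sum.inl x, Sum.inl x, by simp [mkEdge], by simp [mkEdge], Or.inl rfl⟩
    · refine ⟨Sum.inr s, Sum.inl y, by simp [mkEdge], by simp [mkEdge], Or.inr ?_⟩
      exact ⟨hsE, h (by simp)⟩
    · refine ⟨Sum.inl x, Sum.inr t, by simp [mkEdge], by simp [mkEdge], Or.inr ?_⟩
      exact ⟨htE, h (by simp)⟩

lemma main_iff (H : Hypergraph' V) (k : ℕ) :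
    H.HasIncidenceColoring k ↔ HasStrongEdgeColoring H.Levi k := by
  constructor
  · rintro ⟨φ, h1, h2⟩
    refine ⟨Sym2.lift ⟨fun a b => match a, b with
      | Sum.inl x, Sum.inr s => φ (x, s)
      | Sum.inr s, Sum.inl x => φ (x, s)
      | _, _ => 0, by rintro (x | s) (y | t) <;> rfl⟩, ?_, ?_⟩
    · intro e he
      obtain ⟨⟨x, s⟩, hp, rfl⟩ := (mem_edgeSet_iff H e).mp he
      exact h1 _ hp
    · intro e₁ he₁ e₂ he₂ hadj
      obtain ⟨p, hp, rfl⟩ := (mem_edgeSet_iff H e₁).mp he₁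
      obtain ⟨q, hq, rfl⟩ := (mem_edgeSet_iff H e₂).mp he₂
      obtain ⟨x, s⟩ := p
      obtain ⟨y, t⟩ := q
      exact h2 _ _ hp hq ((strongAdj_iff H hp hq).mp hadj)
  · rintro ⟨ψ, h1, h2⟩
    refine ⟨fun p => ψ (mkEdge p), ?_, ?_⟩
    · intro p hp
      exact h1 _ (mkEdge_mem H hp)
    · intro p q hp hq hadj
      exact h2 _ (mkEdge_mem H hp) _ (mkEdge_mem H hq)
        ((strongAdj_iff H hp hq).mpr hadj)

end Aux

theorem statement_0 {V : Type*} [DecidableEq V] (H : Hypergraph' V) :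
    (∀ k : ℕ, 0 < k →
      (H.HasIncidenceColoring k ↔ HasStrongEdgeColoring H.Levi k)) ∧
    H.incChromaticNumber = strongChromaticIndex H.Levi := by
  refine ⟨fun k _ => main_iff H k, ?_⟩
  unfold Hypergraph'.incChromaticNumber strongChromaticIndex
  congr 1
  ext k
  exact main_iff H k
end

section
/- Let t≥1 and let G be a K_{2,t+1}-free (a,b)-regular bipartite graph with a,b≥1. Then for every edge e of G, the sum over all edges e'∈D₂(e) of ζ(e',e) is at most (b−1)·((a+t−1)b−2t) + (a−1)·((b+t−1)a−2t) + (a−1)(b−1)·((3t−1)(a−2)+bt) + (a−1)(b−1)·((3t−1)(b−2)+at); in particular this sum is (4a−3)t·b² + O(b) for fixed a and t. -/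
/-- G has no subgraph isomorphic to K_{2,m}. -/
def K2Free {α : Type*} (G : SimpleGraph α) (m : ℕ) : Prop :=
  ¬ ∃ (u₁ u₂ : α) (W : Finset α), u₁ ≠ u₂ ∧ W.card = m ∧
      ∀ w ∈ W, G.Adj u₁ w ∧ G.Adj u₂ w

/-- A graph on α ⊕ β is bipartite with parts α, β: all edges go between the parts. -/
def BipartiteBetween {α β : Type*} (G : SimpleGraph (α ⊕ β)) : Prop :=
  (∀ x x' : α, ¬ G.Adj (Sum.inl x) (Sum.inl x')) ∧
  (∀ y y' : β, ¬ G.Adj (Sum.inr y) (Sum.inr y'))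

/-- G is (a,b)-regular: every vertex of the first part has degree a and
every vertex of the second part has degree b. -/
def BiregularOn {α β : Type*} (G : SimpleGraph (α ⊕ β)) (a b : ℕ) : Prop :=
  (∀ x : α, (G.neighborSet (Sum.inl x)).ncard = a) ∧
  (∀ y : β, (G.neighborSet (Sum.inr y)).ncard = b)

/-- D₂(e): the set of edges e' ≠ e at distance at most 2 from e in the line graph. -/
def D2 {α : Type*} (G : SimpleGraph α) (e : Sym2 α) : Set (Sym2 α) :=
  {e' | e' ∈ G.edgeSet ∧ StrongAdj G e e'}

/-- ζ(e', e) = |D₂(e') ∩ D₂(e)|. -/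
noncomputable def zeta {α : Type*} (G : SimpleGraph α) (e' e : Sym2 α) : ℕ :=
  (D2 G e' ∩ D2 G e).ncard

/-- The square L(G)² of the line graph of G: vertices are the edges of G, two
distinct edges adjacent when within distance 2 in the line graph. -/
def lineSquare {α : Type*} (G : SimpleGraph α) : SimpleGraph (Sym2 α) where
  Adj e₁ e₂ := e₁ ∈ G.edgeSet ∧ e₂ ∈ G.edgeSet ∧ StrongAdj G e₁ e₂
  symm := by
    constructor
    rintro e₁ e₂ ⟨h₁, h₂, hne, u, v, hu, hv, h⟩
    exact ⟨h₂, h₁, Ne.symm hne, v, u, hv, hu, h.imp Eq.symm fun h' => G.adj_symm h'⟩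
  loopless := by
    constructor
    rintro e ⟨_, _, hne, _⟩
    exact hne rfl

/-- The maximum degree of a finite graph. -/
noncomputable def maxDeg {α : Type*} (G : SimpleGraph α) [Fintype α] : ℕ :=
  Finset.univ.sup fun v => (G.neighborSet v).ncard

/-- G is σ-sparse: for every vertex v, the subgraph induced by the neighborhood of v
has at most (1-σ)·C(Δ(G),2) edges. -/
noncomputable def IsSparse {α : Type*} (G : SimpleGraph α) [Fintype α] (σ : ℝ) : Prop :=
  ∀ v : α,
    (({e ∈ G.edgeSet | ∀ x ∈ e, x ∈ G.neighborSet v}).ncard : ℝ) ≤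
      (1 - σ) * ((maxDeg G).choose 2)


namespace StrongAux

lemma sum_class_le {γ : Type*} (s : Finset γ) (f : γ → ℝ) (B : ℝ) (n : ℕ)
    (hcard : s.card ≤ n) (hB : 0 ≤ B ∨ n = 0) (hf : ∀ i ∈ s, f i ≤ B) :
    ∑ i ∈ s, f i ≤ (n : ℝ) * B := by
  rcases hB with hB | hn
  · calc ∑ i ∈ s, f i ≤ s.card • B := Finset.sum_le_card_nsmul s f B hf
      _ = (s.card : ℝ) * B := nsmul_eq_mul _ _
      _ ≤ (n : ℝ) * B := mul_le_mul_of_nonneg_right (by exact_mod_cast hcard) hB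
  · have hs : s = ∅ := Finset.card_eq_zero.mp (Nat.le_zero.mp (hn ▸ hcard))
    simp [hs, hn]

lemma sum_union_le_of_nonneg {γ : Type*} [DecidableEq γ] (s t : Finset γ) (f : γ → ℝ)
    (hf : ∀ i, 0 ≤ f i) :
    ∑ i ∈ s ∪ t, f i ≤ ∑ i ∈ s, f i + ∑ i ∈ t, f i := by
  rw [← Finset.union_sdiff_self_eq_union, Finset.sum_union Finset.disjoint_sdiff]
  exact add_le_add (le_refl _)
    (Finset.sum_le_sum_of_subset_of_nonneg Finset.sdiff_subset (fun i _ _ => hf i))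

end StrongAux

namespace StrongAux

lemma incSet_ncard {V : Type*} (G : SimpleGraph V) (v : V) :
    (G.incidenceSet v).ncard = (G.neighborSet v).ncard := by
  classical
  rw [← Nat.card_coe_set_eq, ← Nat.card_coe_set_eq]
  exact Nat.card_congr (G.incidenceSetEquivNeighborSet v)

lemma incSet_finite {V : Type*} (G : SimpleGraph V) (v : V)
    (hv : (G.neighborSet v).Finite) : (G.incidenceSet v).Finite := by
  classical
  have h2 : Finite (G.incidenceSet v) :=
    have : Finite (G.neighborSet v) := hv.to_subtype
    Finite.of_equiv _ (G.incidenceSetEquivNeighborSet v).symm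
  exact Set.finite_coe_iff.mp h2

lemma biUnion_ncard_le_fin {ι V : Type*} (I : Finset ι) (f : ι → Set V) (c : ℕ)
    (hc : ∀ i ∈ I, (f i).ncard ≤ c) : (⋃ i ∈ I, f i).ncard ≤ I.card * c := by
  classical
  induction I using Finset.induction_on with
  | empty => simp
  | @insert i s hi ih =>
    rw [Finset.set_biUnion_insert, Finset.card_insert_of_notMem hi]
    calc (f i ∪ ⋃ j ∈ s, f j).ncard ≤ (f i).ncard + (⋃ j ∈ s, f j).ncard :=
          Set.ncard_union_le _ _
      _ ≤ c + s.card * c := by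
          gcongr
          · exact hc i (Finset.mem_insert_self i s)
          · exact ih fun j hj => hc j (Finset.mem_insert_of_mem hj)
      _ = (s.card + 1) * c := by ring

lemma biUnion_ncard_le {ι V : Type*} {S : Set ι} (hS : S.Finite) (f : ι → Set V) (c : ℕ)
    (hc : ∀ i ∈ S, (f i).ncard ≤ c) : (⋃ i ∈ S, f i).ncard ≤ S.ncard * c := by
  classical
  have h1 : ⋃ i ∈ S, f i = ⋃ i ∈ hS.toFinset, f i := by
    ext z; simp [Set.Finite.mem_toFinset]
  rw [h1, Set.ncard_eq_toFinset_card S hS]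
  exact biUnion_ncard_le_fin _ f c (by simpa [Set.Finite.mem_toFinset] using hc)

section Core

variable {V : Type*} {G : SimpleGraph V} {sd : V → Bool} {a b t : ℕ}

lemma side_neq (hside : ∀ u v, G.Adj u v → sd u ≠ sd v) {x w : V}
    (h : w ∈ G.neighborSet x) : sd w = !(sd x) := by
  have := hside x w h
  cases hx : sd x <;> cases hw : sd w <;> simp_all

lemma side_false (hside : ∀ u v, G.Adj u v → sd u ≠ sd v) {x w : V}
    (hsx : sd x = true) (h : w ∈ G.neighborSet x) : sd w = false := by
  have := side_neq hside h; rw [hsx] at this; simpa using this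

lemma side_true (hside : ∀ u v, G.Adj u v → sd u ≠ sd v) {y w : V}
    (hsy : sd y = false) (h : w ∈ G.neighborSet y) : sd w = true := by
  have := side_neq hside h; rw [hsy] at this; simpa using this

lemma edge_form (hside : ∀ u v, G.Adj u v → sd u ≠ sd v) {e : Sym2 V}
    (he : e ∈ G.edgeSet) :
    ∃ u v, e = s(u, v) ∧ G.Adj u v ∧ sd u = true ∧ sd v = false := by
  induction e using Sym2.ind with
  | _ p q =>
    rw [SimpleGraph.mem_edgeSet] at he
    have hpq := hside p q he
    cases hp : sd p
    · refine ⟨q, p, Sym2.eq_swap, he.symm, ?_, hp⟩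
      cases hq : sd q
      · rw [hp, hq] at hpq; exact absurd rfl hpq
      · rfl
    · refine ⟨p, q, rfl, he, hp, ?_⟩
      cases hq : sd q
      · rfl
      · rw [hp, hq] at hpq; exact absurd rfl hpq

lemma mem_D2_struct (hside : ∀ u v, G.Adj u v → sd u ≠ sd v) {x y : V}
    (hxy : G.Adj x y) (hsx : sd x = true) {z : Sym2 V} (hz : z ∈ D2 G s(x, y)) :
    ∃ u v, z = s(u, v) ∧ G.Adj u v ∧ sd u = true ∧ sd v = false ∧ z ≠ s(x, y) ∧
      (u ∈ G.neighborSet y ∨ v ∈ G.neighborSet x) := by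
  obtain ⟨hzE, hne, u0, w, hu0, hw, hor⟩ := hz
  obtain ⟨u, v, rfl, hadj, hsu, hsv⟩ := edge_form hside hzE
  have hsy : sd y = false := side_false hside hsx ((G.mem_neighborSet x y).mpr hxy)
  refine ⟨u, v, rfl, hadj, hsu, hsv, hne.symm, ?_⟩
  have hwuv : w = u ∨ w = v := Sym2.mem_iff.mp hw
  have hu0xy : u0 = x ∨ u0 = y := Sym2.mem_iff.mp hu0
  have key : ∀ w', (w' = u ∨ w' = v) → (w' ∈ G.neighborSet x ∪ G.neighborSet y) →
      (u ∈ G.neighborSet y ∨ v ∈ G.neighborSet x) := by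
    intro w' hw' hmem
    rcases hmem with hmx | hmy
    · have hsw : sd w' = false := side_false hside hsx hmx
      rcases hw' with rfl | rfl
      · rw [hsu] at hsw; exact absurd hsw (by simp)
      · exact Or.inr hmx
    · have hsw : sd w' = true := side_true hside hsy hmy
      rcases hw' with rfl | rfl
      · exact Or.inl hmy
      · rw [hsv] at hsw; exact absurd hsw (by simp)
  rcases hor with heq | hadj0
  · rcases hu0xy with h | h
    · have hwx : w = x := by rw [← heq, h]
      rcases hwuv with h2 | h2
      · have hux : u = x := h2.symm.trans hwx
        rw [hux] at hadj
        exact Or.inr ((G.mem_neighborSet x v).mpr hadj)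
      · exfalso
        have : sd w = false := by rw [h2]; exact hsv
        rw [hwx, hsx] at this; simp at this
    · have hwy : w = y := by rw [← heq, h]
      rcases hwuv with h2 | h2
      · exfalso
        have : sd w = true := by rw [h2]; exact hsu
        rw [hwy, hsy] at this; simp at this
      · have hvy : v = y := h2.symm.trans hwy
        rw [hvy] at hadj
        exact Or.inl ((G.mem_neighborSet y u).mpr (G.adj_symm hadj))
  · rcases hu0xy with h | h
    · have hmx : w ∈ G.neighborSet x := by rw [h] at hadj0; exact hadj0
      exact key w hwuv (Or.inl hmx)
    · have hmy : w ∈ G.neighborSet y := by rw [h] at hadj0; exact hadj0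
      exact key w hwuv (Or.inr hmy)

/-- Same statement but for a given cross-side representation of `z`. -/
lemma D2_cond (hside : ∀ u v, G.Adj u v → sd u ≠ sd v) {x y u v : V}
    (hxy : G.Adj x y) (hsx : sd x = true) (hsu : sd u = true) (hsv : sd v = false)
    (hz : s(u, v) ∈ D2 G s(x, y)) :
    u ∈ G.neighborSet y ∨ v ∈ G.neighborSet x := by
  obtain ⟨u2, v2, heq, hadj2, hsu2, hsv2, hne2, hor⟩ := mem_D2_struct hside hxy hsx hz
  rcases Sym2.eq_iff.mp heq with ⟨h1, h2⟩ | ⟨h1, h2⟩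
  · rw [← h1, ← h2] at hor; exact hor
  · rw [h1, hsv2] at hsu; simp at hsu

lemma not_self_mem_D2 {e : Sym2 V} : e ∉ D2 G e := fun h => h.2.1 rfl


lemma class1_bound
    (hside : ∀ u v, G.Adj u v → sd u ≠ sd v)
    (hdegA : ∀ u, sd u = true → (G.neighborSet u).ncard = a)
    (hdegB : ∀ v, sd v = false → (G.neighborSet v).ncard = b)
    (hfin : ∀ v, (G.neighborSet v).Finite)
    (hcodeg : ∀ u v, u ≠ v → sd u = sd v → (G.neighborSet u ∩ G.neighborSet v).ncard ≤ t)
    {x x' y : V} (hxy : G.Adj x y) (hx'y : G.Adj x' y) (hnexx : x ≠ x') (hsx : sd x = true) :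
    ((D2 G s(x', y) ∩ D2 G s(x, y)).ncard : ℤ) ≤
      (a : ℤ) * b + ((t : ℤ) - 1) * ((b : ℤ) - 2) - 2 := by
  classical
  have hsy : sd y = false := side_false hside hsx ((G.mem_neighborSet x y).mpr hxy)
  have hsx' : sd x' = true := side_true hside hsy ((G.mem_neighborSet y x').mpr (G.adj_symm hx'y))
  set Z := D2 G s(x', y) ∩ D2 G s(x, y) with hZ
  set R1 := ⋃ u ∈ G.neighborSet y, G.incidenceSet u with hR1
  set R2 := ⋃ v ∈ ((G.neighborSet x ∩ G.neighborSet x') \ {y}),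
      (fun u => s(u, v)) '' (G.neighborSet v \ G.neighborSet y) with hR2
  have hR1fin : R1.Finite := Set.Finite.biUnion (hfin y) (fun u _ => incSet_finite G u (hfin u))
  have hIdx2fin : ((G.neighborSet x ∩ G.neighborSet x') \ {y}).Finite :=
    ((hfin x).inter_of_left _).diff
  have hR2fin : R2.Finite :=
    Set.Finite.biUnion hIdx2fin (fun v _ => ((hfin v).diff).image _)
  have hcov : insert s(x, y) (insert s(x', y) Z) ⊆ R1 ∪ R2 := by
    intro z hz
    rcases Set.mem_insert_iff.mp hz with rfl | hz
    · exact Or.inl (Set.mem_biUnion ((G.mem_neighborSet y x).mpr (G.adj_symm hxy))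
        ⟨G.mem_edgeSet.mpr hxy, Sym2.mem_mk_left x y⟩)
    rcases Set.mem_insert_iff.mp hz with rfl | hz
    · exact Or.inl (Set.mem_biUnion ((G.mem_neighborSet y x').mpr (G.adj_symm hx'y))
        ⟨G.mem_edgeSet.mpr hx'y, Sym2.mem_mk_left x' y⟩)
    obtain ⟨u, v, rfl, hadj, hsu, hsv, hnez, hcond1⟩ := mem_D2_struct hside hxy hsx hz.2
    have hcond2 := D2_cond hside hx'y hsx' hsu hsv hz.1
    by_cases huNy : u ∈ G.neighborSet y
    · exact Or.inl (Set.mem_biUnion huNy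
        ⟨G.mem_edgeSet.mpr hadj, Sym2.mem_mk_left u v⟩)
    · have hvx : v ∈ G.neighborSet x := hcond1.resolve_left huNy
      have hvx' : v ∈ G.neighborSet x' := hcond2.resolve_left huNy
      have hvy : v ≠ y := by
        intro h
        rw [h] at hadj
        exact huNy ((G.mem_neighborSet y u).mpr (G.adj_symm hadj))
      refine Or.inr (Set.mem_biUnion (show v ∈ _ from ⟨⟨hvx, hvx'⟩, by simp [hvy]⟩) ?_)
      exact ⟨u, ⟨(G.mem_neighborSet v u).mpr (G.adj_symm hadj), huNy⟩, rfl⟩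
  have hZfin : Z.Finite := (hR1fin.union hR2fin).subset
    (((Set.subset_insert _ _).trans (Set.subset_insert _ _)).trans hcov)
  have hene : s(x, y) ≠ s(x', y) := by
    intro h
    rcases Sym2.eq_iff.mp h with ⟨h1, _⟩ | ⟨h1, _⟩
    · exact hnexx h1
    · exact (G.ne_of_adj hxy) h1
  have hxyZ : s(x, y) ∉ Z := fun h => h.2.2.1 rfl
  have hx'yZ : s(x', y) ∉ Z := fun h => h.1.2.1 rfl
  have hcard1 : (insert s(x, y) (insert s(x', y) Z)).ncard = Z.ncard + 2 := by
    rw [Set.ncard_insert_of_notMem (by simp [hene, hxyZ]) (hZfin.insert _),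
      Set.ncard_insert_of_notMem hx'yZ hZfin]
  have hNyb : (G.neighborSet y).ncard = b := hdegB y hsy
  have hR1card : R1.ncard ≤ b * a := by
    have h := biUnion_ncard_le (hfin y) (fun u => G.incidenceSet u) a (fun u hu => by
      rw [incSet_ncard]
      exact le_of_eq (hdegA u (side_true hside hsy hu)))
    rwa [hNyb] at h
  have hpair : ({x, x'} : Set V) ⊆ G.neighborSet y := by
    intro w hw
    rcases hw with rfl | hw
    · exact (G.mem_neighborSet y w).mpr (G.adj_symm hxy)
    · rcases hw with rfl
      exact (G.mem_neighborSet y w).mpr (G.adj_symm hx'y)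
  have hb2 : 2 ≤ b := by
    have h2 := Set.ncard_le_ncard hpair (hfin y)
    rwa [Set.ncard_pair hnexx, hNyb] at h2
  have hyIn : y ∈ G.neighborSet x ∩ G.neighborSet x' :=
    ⟨(G.mem_neighborSet x y).mpr hxy, (G.mem_neighborSet x' y).mpr hx'y⟩
  have hIfin : (G.neighborSet x ∩ G.neighborSet x').Finite := (hfin x).inter_of_left _
  have ht1 : 1 ≤ t := by
    have h1 : 0 < (G.neighborSet x ∩ G.neighborSet x').ncard :=
      (Set.ncard_pos hIfin).mpr ⟨y, hyIn⟩
    have h2 := hcodeg x x' hnexx (by rw [hsx, hsx'])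
    omega
  have hIdxcard : ((G.neighborSet x ∩ G.neighborSet x') \ {y}).ncard ≤ t - 1 := by
    have h1 := Set.ncard_diff_singleton_add_one hyIn hIfin
    have h2 := hcodeg x x' hnexx (by rw [hsx, hsx'])
    omega
  have hR2card : R2.ncard ≤ (t - 1) * (b - 2) := by
    refine le_trans (biUnion_ncard_le hIdx2fin _ (b - 2) ?_)
      (Nat.mul_le_mul_right _ hIdxcard)
    intro v hv
    obtain ⟨⟨hvx, hvx'⟩, _⟩ := hv
    have hpairv : ({x, x'} : Set V) ⊆ G.neighborSet v := by
      intro w hw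
      rcases hw with rfl | hw
      · exact (G.mem_neighborSet v w).mpr (G.adj_symm hvx)
      · rcases hw with rfl
        exact (G.mem_neighborSet v w).mpr (G.adj_symm hvx')
    calc ((fun u => s(u, v)) '' (G.neighborSet v \ G.neighborSet y)).ncard
        ≤ (G.neighborSet v \ G.neighborSet y).ncard := Set.ncard_image_le ((hfin v).diff)
      _ ≤ (G.neighborSet v \ {x, x'}).ncard :=
          Set.ncard_le_ncard (Set.diff_subset_diff_right hpair) ((hfin v).diff)
      _ = (G.neighborSet v).ncard - 2 := by
          rw [Set.ncard_diff hpairv (Set.toFinite _), Set.ncard_pair hnexx]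
      _ = b - 2 := by rw [hdegB v (side_false hside hsx hvx)]
  have hchain : Z.ncard + 2 ≤ b * a + (t - 1) * (b - 2) := by
    calc Z.ncard + 2 = (insert s(x, y) (insert s(x', y) Z)).ncard := hcard1.symm
      _ ≤ (R1 ∪ R2).ncard := Set.ncard_le_ncard hcov (hR1fin.union hR2fin)
      _ ≤ R1.ncard + R2.ncard := Set.ncard_union_le _ _
      _ ≤ b * a + (t - 1) * (b - 2) := add_le_add hR1card hR2card
  zify [ht1, hb2] at hchain
  linarith


lemma class3_bound
    (hside : ∀ u v, G.Adj u v → sd u ≠ sd v)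
    (hdegA : ∀ u, sd u = true → (G.neighborSet u).ncard = a)
    (hdegB : ∀ v, sd v = false → (G.neighborSet v).ncard = b)
    (hfin : ∀ v, (G.neighborSet v).Finite)
    (hcodeg : ∀ u v, u ≠ v → sd u = sd v → (G.neighborSet u ∩ G.neighborSet v).ncard ≤ t)
    {x y y' x'' : V} (hxy : G.Adj x y) (hxy' : G.Adj x y') (hx''y' : G.Adj x'' y')
    (hyy' : y ≠ y') (hxx'' : x ≠ x'') (hsx : sd x = true) :
    ((D2 G s(x'', y') ∩ D2 G s(x, y)).ncard : ℤ) ≤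
      (b : ℤ) * t + (3 * (t : ℤ) - 1) * ((a : ℤ) - 2) := by
  classical
  have hsy : sd y = false := side_false hside hsx ((G.mem_neighborSet x y).mpr hxy)
  have hsy' : sd y' = false := side_false hside hsx ((G.mem_neighborSet x y').mpr hxy')
  have hsx'' : sd x'' = true :=
    side_true hside hsy' ((G.mem_neighborSet y' x'').mpr (G.adj_symm hx''y'))
  set W := G.neighborSet x ∩ G.neighborSet x'' with hW
  have hWfin : W.Finite := (hfin x).inter_of_left _
  set Z := D2 G s(x'', y') ∩ D2 G s(x, y) with hZ
  set R1 := ⋃ v ∈ W, G.incidenceSet v with hR1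
  set R2 := (fun v => s(x, v)) '' (G.neighborSet x \ G.neighborSet x'') with hR2
  set R3 := ⋃ v ∈ (G.neighborSet x \ G.neighborSet x''), (fun u => s(u, v)) '' ((G.neighborSet v ∩ G.neighborSet y') \ {x}) with hR3
  set R4 := ⋃ u ∈ ((G.neighborSet y ∩ G.neighborSet y') \ {x}), (fun v => s(u, v)) '' (G.neighborSet u \ {y, y'}) with hR4
  set R5 := ⋃ v ∈ (G.neighborSet x'' \ G.neighborSet x), (fun u => s(u, v)) '' (G.neighborSet v ∩ G.neighborSet y) with hR5
  have hR1fin : R1.Finite := Set.Finite.biUnion hWfin (fun v _ => incSet_finite G v (hfin v))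
  have hR2fin : R2.Finite := ((hfin x).diff).image _
  have hR3fin : R3.Finite :=
    Set.Finite.biUnion ((hfin x).diff) (fun v _ => (((hfin v).inter_of_left _).diff).image _)
  have hR4fin : R4.Finite :=
    Set.Finite.biUnion (((hfin y).inter_of_left _).diff) (fun u _ => ((hfin u).diff).image _)
  have hR5fin : R5.Finite :=
    Set.Finite.biUnion ((hfin x'').diff) (fun v _ => ((hfin v).inter_of_left _).image _)
  have hy'W : y' ∈ W :=
    ⟨(G.mem_neighborSet x y').mpr hxy', (G.mem_neighborSet x'' y').mpr hx''y'⟩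
  have hyNx : y ∈ G.neighborSet x := (G.mem_neighborSet x y).mpr hxy
  have hcov : insert s(x, y) (insert s(x'', y') Z) ⊆ R1 ∪ (R2 ∪ (R3 ∪ (R4 ∪ R5))) := by
    intro z hz
    rcases Set.mem_insert_iff.mp hz with rfl | hz
    · by_cases hyx'' : y ∈ G.neighborSet x''
      · exact Or.inl (Set.mem_biUnion ⟨hyNx, hyx''⟩
          ⟨G.mem_edgeSet.mpr hxy, Sym2.mem_mk_right x y⟩)
      · exact Or.inr (Or.inl ⟨y, ⟨hyNx, hyx''⟩, rfl⟩)
    rcases Set.mem_insert_iff.mp hz with rfl | hz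
    · exact Or.inl (Set.mem_biUnion hy'W
        ⟨G.mem_edgeSet.mpr hx''y', Sym2.mem_mk_right x'' y'⟩)
    obtain ⟨u, v, rfl, hadj, hsu, hsv, hnez, hcond1⟩ := mem_D2_struct hside hxy hsx hz.2
    have hcond2 := D2_cond hside hx''y' hsx'' hsu hsv hz.1
    by_cases hvNx : v ∈ G.neighborSet x
    · by_cases hvNx'' : v ∈ G.neighborSet x''
      · exact Or.inl (Set.mem_biUnion ⟨hvNx, hvNx''⟩
          ⟨G.mem_edgeSet.mpr hadj, Sym2.mem_mk_right u v⟩)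
      · have huNy' : u ∈ G.neighborSet y' := by
          rcases hcond2 with h | h
          · exact h
          · exact absurd h hvNx''
        by_cases hux : u = x
        · refine Or.inr (Or.inl ?_)
          refine ⟨v, ⟨hvNx, hvNx''⟩, ?_⟩
          rw [hux]
        · refine Or.inr (Or.inr (Or.inl (Set.mem_biUnion ⟨hvNx, hvNx''⟩ ?_)))
          exact ⟨u, ⟨⟨(G.mem_neighborSet v u).mpr (G.adj_symm hadj), huNy'⟩, by simp [hux]⟩, rfl⟩
    · have huNy : u ∈ G.neighborSet y := by
        rcases hcond1 with h | h
        · exact h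
        · exact absurd h hvNx
      by_cases hvNx'' : v ∈ G.neighborSet x''
      · refine Or.inr (Or.inr (Or.inr (Or.inr (Set.mem_biUnion ⟨hvNx'', hvNx⟩ ?_))))
        exact ⟨u, ⟨(G.mem_neighborSet v u).mpr (G.adj_symm hadj), huNy⟩, rfl⟩
      · have huNy' : u ∈ G.neighborSet y' := by
          rcases hcond2 with h | h
          · exact h
          · exact absurd h hvNx''
        have hux : u ≠ x := by
          intro h
          rw [h] at hadj
          exact hvNx ((G.mem_neighborSet x v).mpr hadj)
        refine Or.inr (Or.inr (Or.inr (Or.inl (Set.mem_biUnion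
          (show u ∈ (G.neighborSet y ∩ G.neighborSet y') \ {x} from ⟨⟨huNy, huNy'⟩, by simp [hux]⟩) ?_))))
        refine ⟨v, ⟨(G.mem_neighborSet u v).mpr hadj, ?_⟩, rfl⟩
        intro hmem
        rcases hmem with h | h
        · rw [h] at hvNx; exact hvNx hyNx
        · rw [h] at hvNx; exact hvNx ((G.mem_neighborSet x y').mpr hxy')
  have hRfin : (R1 ∪ (R2 ∪ (R3 ∪ (R4 ∪ R5)))).Finite :=
    hR1fin.union (hR2fin.union (hR3fin.union (hR4fin.union hR5fin)))
  have hZfin : Z.Finite := hRfin.subset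
    (((Set.subset_insert _ _).trans (Set.subset_insert _ _)).trans hcov)
  have hene : s(x, y) ≠ s(x'', y') := by
    intro h
    rcases Sym2.eq_iff.mp h with ⟨h1, _⟩ | ⟨h1, _⟩
    · exact hxx'' h1
    · exact (G.ne_of_adj hxy') h1
  have hxyZ : s(x, y) ∉ Z := fun h => h.2.2.1 rfl
  have he'Z : s(x'', y') ∉ Z := fun h => h.1.2.1 rfl
  have hcard1 : (insert s(x, y) (insert s(x'', y') Z)).ncard = Z.ncard + 2 := by
    rw [Set.ncard_insert_of_notMem (by simp [hene, hxyZ]) (hZfin.insert _),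
      Set.ncard_insert_of_notMem he'Z hZfin]
  -- basic quantities
  have hNxa : (G.neighborSet x).ncard = a := hdegA x hsx
  have hNx''a : (G.neighborSet x'').ncard = a := hdegA x'' hsx''
  set sW := W.ncard with hsW
  have hs1 : 1 ≤ sW := (Set.ncard_pos hWfin).mpr ⟨y', hy'W⟩
  have hst : sW ≤ t := hcodeg x x'' hxx'' (by rw [hsx, hsx''])
  have hsa : sW ≤ a := by
    rw [hsW, ← hNxa]
    exact Set.ncard_le_ncard Set.inter_subset_left (hfin x)
  have ht1 : 1 ≤ t := le_trans hs1 hst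
  have hpairy : ({y, y'} : Set V) ⊆ G.neighborSet x := by
    intro w hw
    rcases hw with rfl | hw
    · exact hyNx
    · rcases hw with rfl
      exact (G.mem_neighborSet x w).mpr hxy'
  have ha2 : 2 ≤ a := by
    have h2 := Set.ncard_le_ncard hpairy (hfin x)
    rwa [Set.ncard_pair hyy', hNxa] at h2
  have hpairx : ({x, x''} : Set V) ⊆ G.neighborSet y' := by
    intro w hw
    rcases hw with rfl | hw
    · exact (G.mem_neighborSet y' w).mpr (G.adj_symm hxy')
    · rcases hw with rfl
      exact (G.mem_neighborSet y' w).mpr (G.adj_symm hx''y')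
  have hb2 : 2 ≤ b := by
    have h2 := Set.ncard_le_ncard hpairx (hfin y')
    rwa [Set.ncard_pair hxx'', hdegB y' hsy'] at h2
  have hTop2 : (G.neighborSet x \ G.neighborSet x'').ncard = a - sW := by
    rw [show G.neighborSet x \ G.neighborSet x'' = G.neighborSet x \ W from (Set.diff_self_inter (s := G.neighborSet x) (t := G.neighborSet x'')).symm,
      Set.ncard_diff Set.inter_subset_left hWfin, hNxa]
  have hTop5 : (G.neighborSet x'' \ G.neighborSet x).ncard = a - sW := by
    rw [show G.neighborSet x'' \ G.neighborSet x = G.neighborSet x'' \ (G.neighborSet x'' ∩ G.neighborSet x) from (Set.diff_self_inter).symm,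
      Set.ncard_diff Set.inter_subset_left ((hfin x'').inter_of_left _), hNx''a,
      show G.neighborSet x'' ∩ G.neighborSet x = W from Set.inter_comm _ _]
  -- region cardinalities
  have hR1card : R1.ncard ≤ sW * b := by
    refine biUnion_ncard_le hWfin _ b (fun v hv => ?_)
    rw [incSet_ncard]
    exact le_of_eq (hdegB v (side_false hside hsx hv.1))
  have hR2card : R2.ncard ≤ a - sW := by
    rw [← hTop2]
    exact Set.ncard_image_le ((hfin x).diff)
  have hR3card : R3.ncard ≤ (a - sW) * (t - 1) := by
    rw [← hTop2]
    refine biUnion_ncard_le ((hfin x).diff) _ (t - 1) (fun v hv => ?_)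
    have hxmem : x ∈ G.neighborSet v ∩ G.neighborSet y' :=
      ⟨(G.mem_neighborSet v x).mpr (G.adj_symm hv.1), (G.mem_neighborSet y' x).mpr (G.adj_symm hxy')⟩
    have hvfin : (G.neighborSet v ∩ G.neighborSet y').Finite := (hfin v).inter_of_left _
    have h1 := Set.ncard_diff_singleton_add_one hxmem hvfin
    have hvney' : v ≠ y' := by
      intro h
      exact hv.2 (h ▸ hy'W.2)
    have h2 := hcodeg v y' hvney' (by rw [side_false hside hsx hv.1, hsy'])
    calc ((fun u => s(u, v)) '' ((G.neighborSet v ∩ G.neighborSet y') \ {x})).ncard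
        ≤ ((G.neighborSet v ∩ G.neighborSet y') \ {x}).ncard := Set.ncard_image_le (hvfin.diff)
      _ ≤ t - 1 := by omega
  have hR4card : R4.ncard ≤ (t - 1) * (a - 2) := by
    have hxmem : x ∈ G.neighborSet y ∩ G.neighborSet y' :=
      ⟨(G.mem_neighborSet y x).mpr (G.adj_symm hxy), (G.mem_neighborSet y' x).mpr (G.adj_symm hxy')⟩
    have hIfin : (G.neighborSet y ∩ G.neighborSet y').Finite := (hfin y).inter_of_left _
    have h1 := Set.ncard_diff_singleton_add_one hxmem hIfin
    have h2 := hcodeg y y' hyy' (by rw [hsy, hsy'])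
    refine le_trans (biUnion_ncard_le (hIfin.diff) _ (a - 2) (fun u hu => ?_))
      (Nat.mul_le_mul_right _ (by omega))
    have hpairu : ({y, y'} : Set V) ⊆ G.neighborSet u := by
      intro w hw
      rcases hw with rfl | hw
      · exact (G.mem_neighborSet u w).mpr (G.adj_symm hu.1.1)
      · rcases hw with rfl
        exact (G.mem_neighborSet u w).mpr (G.adj_symm hu.1.2)
    calc ((fun v => s(u, v)) '' (G.neighborSet u \ {y, y'})).ncard
        ≤ (G.neighborSet u \ {y, y'}).ncard := Set.ncard_image_le ((hfin u).diff)
      _ = (G.neighborSet u).ncard - 2 := by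
          rw [Set.ncard_diff hpairu (Set.toFinite _), Set.ncard_pair hyy']
      _ = a - 2 := by rw [hdegA u (side_true hside hsy hu.1.1)]
  have hR5card : R5.ncard ≤ (a - sW) * t := by
    rw [← hTop5]
    refine biUnion_ncard_le ((hfin x'').diff) _ t (fun v hv => ?_)
    have hvney : v ≠ y := by
      intro h
      exact hv.2 (h ▸ hyNx)
    have h2 := hcodeg v y hvney (by rw [side_false hside hsx'' hv.1, hsy])
    calc ((fun u => s(u, v)) '' (G.neighborSet v ∩ G.neighborSet y)).ncard
        ≤ (G.neighborSet v ∩ G.neighborSet y).ncard := Set.ncard_image_le ((hfin v).inter_of_left _)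
      _ ≤ t := h2
  have hchain : Z.ncard + 2 ≤
      sW * b + ((a - sW) + ((a - sW) * (t - 1) + ((t - 1) * (a - 2) + (a - sW) * t))) := by
    calc Z.ncard + 2 = (insert s(x, y) (insert s(x'', y') Z)).ncard := hcard1.symm
      _ ≤ (R1 ∪ (R2 ∪ (R3 ∪ (R4 ∪ R5)))).ncard := Set.ncard_le_ncard hcov hRfin
      _ ≤ R1.ncard + (R2 ∪ (R3 ∪ (R4 ∪ R5))).ncard := Set.ncard_union_le _ _
      _ ≤ R1.ncard + (R2.ncard + (R3 ∪ (R4 ∪ R5)).ncard) := by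
          gcongr; exact Set.ncard_union_le _ _
      _ ≤ R1.ncard + (R2.ncard + (R3.ncard + (R4 ∪ R5).ncard)) := by
          gcongr; exact Set.ncard_union_le _ _
      _ ≤ R1.ncard + (R2.ncard + (R3.ncard + (R4.ncard + R5.ncard))) := by
          gcongr; exact Set.ncard_union_le _ _
      _ ≤ _ := by
          gcongr
  zify [ht1, ha2, hsa] at hchain
  have key1 : (0 : ℤ) ≤ ((t : ℤ) - sW) * ((b : ℤ) - 2) :=
    mul_nonneg (sub_nonneg.mpr (by exact_mod_cast hst)) (sub_nonneg.mpr (by exact_mod_cast hb2))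
  have key2 : (0 : ℤ) ≤ ((t : ℤ) - 1) * ((sW : ℤ) - 1) :=
    mul_nonneg (sub_nonneg.mpr (by exact_mod_cast ht1)) (sub_nonneg.mpr (by exact_mod_cast hs1))
  nlinarith [hchain, key1, key2]

end Core

end StrongAux


set_option maxHeartbeats 2000000 in
theorem statement_4 (a t : ℕ) (ht : 1 ≤ t) (ha : 1 ≤ a) :
    ∃ C : ℝ, ∀ b : ℕ, 1 ≤ b →
      ∀ (α β : Type) (G : SimpleGraph (α ⊕ β)),
        BipartiteBetween G → BiregularOn G a b → K2Free G (t + 1) →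
        ∀ e ∈ G.edgeSet,
          (∑ᶠ e' ∈ D2 G e, (zeta G e' e : ℝ)) ≤
              ((b : ℝ) - 1) * (((a : ℝ) + t - 1) * b - 2 * t)
              + ((a : ℝ) - 1) * (((b : ℝ) + t - 1) * a - 2 * t)
              + ((a : ℝ) - 1) * ((b : ℝ) - 1) * ((3 * (t : ℝ) - 1) * ((a : ℝ) - 2) + (b : ℝ) * t)
              + ((a : ℝ) - 1) * ((b : ℝ) - 1) * ((3 * (t : ℝ) - 1) * ((b : ℝ) - 2) + (a : ℝ) * t) ∧
          (∑ᶠ e' ∈ D2 G e, (zeta G e' e : ℝ)) ≤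
              (4 * (a : ℝ) - 3) * t * (b : ℝ) ^ 2 + C * b := by
  classical
  refine ⟨77 * (a : ℝ) ^ 2 * t, ?_⟩
  intro b hb α β G hbip hreg hK2 e he
  have haR : (1 : ℝ) ≤ (a : ℝ) := by exact_mod_cast ha
  have hbR : (1 : ℝ) ≤ (b : ℝ) := by exact_mod_cast hb
  have htR : (1 : ℝ) ≤ (t : ℝ) := by exact_mod_cast ht
  set sd : α ⊕ β → Bool := Sum.isLeft with hsd
  have hside : ∀ u v, G.Adj u v → sd u ≠ sd v := by
    intro u v hadj
    match u, v with
    | .inl u, .inl v => exact absurd hadj (hbip.1 u v)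
    | .inl u, .inr v => simp [hsd]
    | .inr u, .inl v => simp [hsd]
    | .inr u, .inr v => exact absurd hadj (hbip.2 u v)
  have hdegA : ∀ u, sd u = true → (G.neighborSet u).ncard = a := by
    intro u hu
    match u with
    | .inl u => exact hreg.1 u
    | .inr u => simp [hsd] at hu
  have hdegB : ∀ u, sd u = false → (G.neighborSet u).ncard = b := by
    intro u hu
    match u with
    | .inl u => simp [hsd] at hu
    | .inr u => exact hreg.2 u
  have hfin : ∀ v, (G.neighborSet v).Finite := by
    intro v
    by_contra hinf
    have h0 : (G.neighborSet v).ncard = 0 := Set.Infinite.ncard hinf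
    rcases v with u | u
    · rw [hreg.1 u] at h0; omega
    · rw [hreg.2 u] at h0; omega
  have hcodeg : ∀ u v, u ≠ v → sd u = sd v →
      (G.neighborSet u ∩ G.neighborSet v).ncard ≤ t := by
    intro u v huv _
    by_contra hgt
    push_neg at hgt
    obtain ⟨S, hSsub, hScard⟩ := Set.exists_subset_card_eq (n := t + 1) hgt
    have hSfin : S.Finite := by
      by_contra hSf
      have := Set.Infinite.ncard hSf
      omega
    refine hK2 ⟨u, v, hSfin.toFinset, huv, ?_, ?_⟩
    · rw [← Set.ncard_eq_toFinset_card S hSfin]; exact hScard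
    · intro w hw
      have hw' := hSsub ((Set.Finite.mem_toFinset hSfin).mp hw)
      exact ⟨hw'.1, hw'.2⟩
  have hside' : ∀ u v, G.Adj u v → (!(sd u)) ≠ (!(sd v)) := by
    intro u v h hne2
    exact hside u v h (by simpa using hne2)
  have hdegA' : ∀ u, (!(sd u)) = true → (G.neighborSet u).ncard = b := by
    intro u hu
    apply hdegB
    cases h : sd u
    · rfl
    · rw [h] at hu; simp at hu
  have hdegB' : ∀ u, (!(sd u)) = false → (G.neighborSet u).ncard = a := by
    intro u hu
    apply hdegA
    cases h : sd u
    · rw [h] at hu; simp at hu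
    · rfl
  have hcodeg' : ∀ u v, u ≠ v → (!(sd u)) = (!(sd v)) →
      (G.neighborSet u ∩ G.neighborSet v).ncard ≤ t := by
    intro u v huv h
    exact hcodeg u v huv (by simpa using h)
  obtain ⟨x, y, hE, hadjxy, hsx, hsy⟩ := StrongAux.edge_form hside he
  subst hE
  set NF : α ⊕ β → Finset (α ⊕ β) := fun v => (hfin v).toFinset with hNFdef
  have hNFmem : ∀ v w, w ∈ NF v ↔ G.Adj v w := by
    intro v w
    rw [hNFdef]
    exact Set.Finite.mem_toFinset _
  have hNFcard : ∀ v, (NF v).card = (G.neighborSet v).ncard := fun v =>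
    (Set.ncard_eq_toFinset_card _ (hfin v)).symm
  set C1 : Finset (Sym2 (α ⊕ β)) := ((NF y).erase x).image (fun x' => s(x', y)) with hC1
  set C2 : Finset (Sym2 (α ⊕ β)) := ((NF x).erase y).image (fun y' => s(x, y')) with hC2
  set C3 : Finset (Sym2 (α ⊕ β)) :=
    ((NF x).erase y).biUnion (fun y' => ((NF y').erase x).image (fun x'' => s(x'', y'))) with hC3
  set C4 : Finset (Sym2 (α ⊕ β)) :=
    ((NF y).erase x).biUnion (fun x' => ((NF x').erase y).image (fun y'' => s(x', y''))) with hC4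
  have hcovset : D2 G s(x, y) ⊆ ↑((C1 ∪ C2) ∪ (C3 ∪ C4)) := by
    intro z hz
    obtain ⟨u, v, rfl, hadjz, hsu, hsv, hnez, hcond⟩ :=
      StrongAux.mem_D2_struct hside hadjxy hsx hz
    simp only [Finset.coe_union, Set.mem_union, Finset.mem_coe]
    by_cases hvy : v = y
    · refine Or.inl (Or.inl ?_)
      refine Finset.mem_image.mpr ⟨u, Finset.mem_erase.mpr ⟨?_, ?_⟩, by rw [hvy]⟩
      · intro h; exact hnez (by rw [h, hvy])
      · refine (hNFmem y u).mpr ?_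
        rw [hvy] at hadjz; exact G.adj_symm hadjz
    · by_cases hvNx : G.Adj x v
      · by_cases hux : u = x
        · refine Or.inl (Or.inr ?_)
          exact Finset.mem_image.mpr
            ⟨v, Finset.mem_erase.mpr ⟨hvy, (hNFmem x v).mpr hvNx⟩, by rw [hux]⟩
        · refine Or.inr (Or.inl ?_)
          refine Finset.mem_biUnion.mpr
            ⟨v, Finset.mem_erase.mpr ⟨hvy, (hNFmem x v).mpr hvNx⟩, ?_⟩
          exact Finset.mem_image.mpr
            ⟨u, Finset.mem_erase.mpr ⟨hux, (hNFmem v u).mpr (G.adj_symm hadjz)⟩, rfl⟩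
      · have huNy : u ∈ G.neighborSet y := by
          rcases hcond with h | h
          · exact h
          · exact absurd h hvNx
        have hux : u ≠ x := by
          intro h; rw [h] at hadjz; exact hvNx hadjz
        refine Or.inr (Or.inr ?_)
        refine Finset.mem_biUnion.mpr
          ⟨u, Finset.mem_erase.mpr ⟨hux, (hNFmem y u).mpr huNy⟩, ?_⟩
        exact Finset.mem_image.mpr
          ⟨v, Finset.mem_erase.mpr ⟨hvy, (hNFmem u v).mpr hadjz⟩, rfl⟩
  have hD2fin : (D2 G s(x, y)).Finite :=
    Set.Finite.subset (Finset.finite_toSet _) hcovset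
  have hcovF : hD2fin.toFinset ⊆ (C1 ∪ C2) ∪ (C3 ∪ C4) := by
    intro z hz
    exact Finset.mem_coe.mp (hcovset ((Set.Finite.mem_toFinset _).mp hz))
  have hxNy : x ∈ NF y := (hNFmem y x).mpr (G.adj_symm hadjxy)
  have hyNx : y ∈ NF x := (hNFmem x y).mpr hadjxy
  have hNFyb : (NF y).card = b := by rw [hNFcard y]; exact hdegB y hsy
  have hNFxa : (NF x).card = a := by rw [hNFcard x]; exact hdegA x hsx
  have hc1 : C1.card ≤ b - 1 := by
    refine Finset.card_image_le.trans ?_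
    rw [Finset.card_erase_of_mem hxNy, hNFyb]
  have hc2 : C2.card ≤ a - 1 := by
    refine Finset.card_image_le.trans ?_
    rw [Finset.card_erase_of_mem hyNx, hNFxa]
  have hc3 : C3.card ≤ (a - 1) * (b - 1) := by
    refine (Finset.card_biUnion_le_card_mul _ _ (b - 1) ?_).trans ?_
    · intro y' hy'
      obtain ⟨_, hy'Nx⟩ := Finset.mem_erase.mp hy'
      have hxy' : G.Adj x y' := (hNFmem x y').mp hy'Nx
      have hsy' : sd y' = false := StrongAux.side_false hside hsx hxy'
      refine Finset.card_image_le.trans ?_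
      rw [Finset.card_erase_of_mem ((hNFmem y' x).mpr (G.adj_symm hxy')), hNFcard y',
        hdegB y' hsy']
    · rw [Finset.card_erase_of_mem hyNx, hNFxa]
  have hc4 : C4.card ≤ (b - 1) * (a - 1) := by
    refine (Finset.card_biUnion_le_card_mul _ _ (a - 1) ?_).trans ?_
    · intro x' hx'
      obtain ⟨_, hx'Ny⟩ := Finset.mem_erase.mp hx'
      have hx'y : G.Adj x' y := G.adj_symm ((hNFmem y x').mp hx'Ny)
      have hsx' : sd x' = true := StrongAux.side_true hside hsy
        ((G.mem_neighborSet y x').mpr (G.adj_symm hx'y))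
      refine Finset.card_image_le.trans ?_
      rw [Finset.card_erase_of_mem ((hNFmem x' y).mpr hx'y), hNFcard x', hdegA x' hsx']
    · rw [Finset.card_erase_of_mem hxNy, hNFyb]
  -- per-element bounds
  have hB1 : ∀ e' ∈ C1, (zeta G e' s(x, y) : ℝ) ≤ ((a : ℝ) + t - 1) * b - 2 * t := by
    intro e' he'
    obtain ⟨x', hx'm, rfl⟩ := Finset.mem_image.mp he'
    obtain ⟨hx'ne, hx'Ny⟩ := Finset.mem_erase.mp hx'm
    have hx'y : G.Adj x' y := G.adj_symm ((hNFmem y x').mp hx'Ny)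
    have hZ := StrongAux.class1_bound hside hdegA hdegB hfin hcodeg hadjxy hx'y
      (Ne.symm hx'ne) hsx
    have hZ' : ((D2 G s(x', y) ∩ D2 G s(x, y)).ncard : ℝ) ≤
        (a : ℝ) * b + ((t : ℝ) - 1) * ((b : ℝ) - 2) - 2 := by exact_mod_cast hZ
    calc (zeta G s(x', y) s(x, y) : ℝ)
        = ((D2 G s(x', y) ∩ D2 G s(x, y)).ncard : ℝ) := rfl
      _ ≤ (a : ℝ) * b + ((t : ℝ) - 1) * ((b : ℝ) - 2) - 2 := hZ'
      _ = ((a : ℝ) + t - 1) * b - 2 * t := by ring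
  have hB2 : ∀ e' ∈ C2, (zeta G e' s(x, y) : ℝ) ≤ ((b : ℝ) + t - 1) * a - 2 * t := by
    intro e' he'
    obtain ⟨y', hy'm, rfl⟩ := Finset.mem_image.mp he'
    obtain ⟨hy'ne, hy'Nx⟩ := Finset.mem_erase.mp hy'm
    have hxy' : G.Adj x y' := (hNFmem x y').mp hy'Nx
    have hsy' : sd y' = false := StrongAux.side_false hside hsx hxy'
    have hZ := StrongAux.class1_bound (sd := fun v => !(sd v)) (a := b) (b := a)
      hside' hdegA' hdegB' hfin hcodeg' (G.adj_symm hxy') (G.adj_symm hadjxy) hy'ne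
      (by simp [hsy'])
    have hZ' : ((D2 G s(y, x) ∩ D2 G s(y', x)).ncard : ℝ) ≤
        (b : ℝ) * a + ((t : ℝ) - 1) * ((a : ℝ) - 2) - 2 := by exact_mod_cast hZ
    have hswap : zeta G s(x, y') s(x, y) = (D2 G s(y, x) ∩ D2 G s(y', x)).ncard := by
      show (D2 G s(x, y') ∩ D2 G s(x, y)).ncard = _
      rw [show s(x, y') = s(y', x) from Sym2.eq_swap,
        show s(x, y) = s(y, x) from Sym2.eq_swap, Set.inter_comm]
    calc (zeta G s(x, y') s(x, y) : ℝ)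
        = ((D2 G s(y, x) ∩ D2 G s(y', x)).ncard : ℝ) := by rw [hswap]
      _ ≤ (b : ℝ) * a + ((t : ℝ) - 1) * ((a : ℝ) - 2) - 2 := hZ'
      _ = ((b : ℝ) + t - 1) * a - 2 * t := by ring
  have hB3 : ∀ e' ∈ C3, (zeta G e' s(x, y) : ℝ) ≤
      (3 * (t : ℝ) - 1) * ((a : ℝ) - 2) + (b : ℝ) * t := by
    intro e' he'
    obtain ⟨y', hy'm, hmem⟩ := Finset.mem_biUnion.mp he'
    obtain ⟨x'', hx''m, rfl⟩ := Finset.mem_image.mp hmem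
    obtain ⟨hy'ne, hy'Nx⟩ := Finset.mem_erase.mp hy'm
    obtain ⟨hx''ne, hx''Ny'⟩ := Finset.mem_erase.mp hx''m
    have hxy' : G.Adj x y' := (hNFmem x y').mp hy'Nx
    have hx''y' : G.Adj x'' y' := G.adj_symm ((hNFmem y' x'').mp hx''Ny')
    have hZ := StrongAux.class3_bound hside hdegA hdegB hfin hcodeg
      hadjxy hxy' hx''y' (Ne.symm hy'ne) (Ne.symm hx''ne) hsx
    have hZ' : ((D2 G s(x'', y') ∩ D2 G s(x, y)).ncard : ℝ) ≤
        (b : ℝ) * t + (3 * (t : ℝ) - 1) * ((a : ℝ) - 2) := by exact_mod_cast hZ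
    calc (zeta G s(x'', y') s(x, y) : ℝ)
        = ((D2 G s(x'', y') ∩ D2 G s(x, y)).ncard : ℝ) := rfl
      _ ≤ (b : ℝ) * t + (3 * (t : ℝ) - 1) * ((a : ℝ) - 2) := hZ'
      _ = (3 * (t : ℝ) - 1) * ((a : ℝ) - 2) + (b : ℝ) * t := by ring
  have hB4 : ∀ e' ∈ C4, (zeta G e' s(x, y) : ℝ) ≤
      (3 * (t : ℝ) - 1) * ((b : ℝ) - 2) + (a : ℝ) * t := by
    intro e' he'
    obtain ⟨x', hx'm, hmem⟩ := Finset.mem_biUnion.mp he'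
    obtain ⟨y'', hy''m, rfl⟩ := Finset.mem_image.mp hmem
    obtain ⟨hx'ne, hx'Ny⟩ := Finset.mem_erase.mp hx'm
    obtain ⟨hy''ne, hy''Nx'⟩ := Finset.mem_erase.mp hy''m
    have hyx' : G.Adj y x' := (hNFmem y x').mp hx'Ny
    have hx'y'' : G.Adj x' y'' := (hNFmem x' y'').mp hy''Nx'
    have hZ := StrongAux.class3_bound (sd := fun v => !(sd v)) (a := b) (b := a)
      hside' hdegA' hdegB' hfin hcodeg' (G.adj_symm hadjxy) hyx' (G.adj_symm hx'y'')
      (Ne.symm hx'ne) (Ne.symm hy''ne) (by simp [hsy])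
    have hZ' : ((D2 G s(y'', x') ∩ D2 G s(y, x)).ncard : ℝ) ≤
        (a : ℝ) * t + (3 * (t : ℝ) - 1) * ((b : ℝ) - 2) := by exact_mod_cast hZ
    have hswap : zeta G s(x', y'') s(x, y) = (D2 G s(y'', x') ∩ D2 G s(y, x)).ncard := by
      show (D2 G s(x', y'') ∩ D2 G s(x, y)).ncard = _
      rw [show s(x', y'') = s(y'', x') from Sym2.eq_swap,
        show s(x, y) = s(y, x) from Sym2.eq_swap]
    calc (zeta G s(x', y'') s(x, y) : ℝ)
        = ((D2 G s(y'', x') ∩ D2 G s(y, x)).ncard : ℝ) := by rw [hswap]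
      _ ≤ (a : ℝ) * t + (3 * (t : ℝ) - 1) * ((b : ℝ) - 2) := hZ'
      _ = (3 * (t : ℝ) - 1) * ((b : ℝ) - 2) + (a : ℝ) * t := by ring
  -- class sums
  have hS1 : ∑ e' ∈ C1, (zeta G e' s(x, y) : ℝ) ≤
      ((b : ℝ) - 1) * (((a : ℝ) + t - 1) * b - 2 * t) := by
    have h := StrongAux.sum_class_le C1 _ _ (b - 1) hc1 ?_ hB1
    · rwa [Nat.cast_sub hb, Nat.cast_one] at h
    by_cases hb2 : 2 ≤ b
    · left
      have hb2R : (2 : ℝ) ≤ (b : ℝ) := by exact_mod_cast hb2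
      nlinarith [mul_nonneg (sub_nonneg.mpr haR) (le_trans zero_le_one hbR),
        mul_nonneg (le_trans zero_le_one htR) (sub_nonneg.mpr hb2R)]
    · right; omega
  have hS2 : ∑ e' ∈ C2, (zeta G e' s(x, y) : ℝ) ≤
      ((a : ℝ) - 1) * (((b : ℝ) + t - 1) * a - 2 * t) := by
    have h := StrongAux.sum_class_le C2 _ _ (a - 1) hc2 ?_ hB2
    · rwa [Nat.cast_sub ha, Nat.cast_one] at h
    by_cases ha2 : 2 ≤ a
    · left
      have ha2R : (2 : ℝ) ≤ (a : ℝ) := by exact_mod_cast ha2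
      nlinarith [mul_nonneg (sub_nonneg.mpr hbR) (le_trans zero_le_one haR),
        mul_nonneg (le_trans zero_le_one htR) (sub_nonneg.mpr ha2R)]
    · right; omega
  have hS3 : ∑ e' ∈ C3, (zeta G e' s(x, y) : ℝ) ≤
      ((a : ℝ) - 1) * ((b : ℝ) - 1) * ((3 * (t : ℝ) - 1) * ((a : ℝ) - 2) + (b : ℝ) * t) := by
    have h := StrongAux.sum_class_le C3 _ _ ((a - 1) * (b - 1)) hc3 ?_ hB3
    · rw [Nat.cast_mul, Nat.cast_sub hb, Nat.cast_sub ha, Nat.cast_one] at h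
      exact h
    by_cases ha2 : 2 ≤ a
    · left
      have ha2R : (2 : ℝ) ≤ (a : ℝ) := by exact_mod_cast ha2
      nlinarith [mul_nonneg (by linarith : (0:ℝ) ≤ 3 * (t:ℝ) - 1) (sub_nonneg.mpr ha2R),
        mul_nonneg (le_trans zero_le_one hbR) (le_trans zero_le_one htR)]
    · right
      have : a = 1 := by omega
      simp [this]
  have hS4 : ∑ e' ∈ C4, (zeta G e' s(x, y) : ℝ) ≤
      ((a : ℝ) - 1) * ((b : ℝ) - 1) * ((3 * (t : ℝ) - 1) * ((b : ℝ) - 2) + (a : ℝ) * t) := by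
    have h := StrongAux.sum_class_le C4 _ _ ((b - 1) * (a - 1)) hc4 ?_ hB4
    · rw [Nat.cast_mul, Nat.cast_sub hb, Nat.cast_sub ha, Nat.cast_one] at h
      calc ∑ e' ∈ C4, (zeta G e' s(x, y) : ℝ) ≤ _ := h
        _ = ((a : ℝ) - 1) * ((b : ℝ) - 1) *
            ((3 * (t : ℝ) - 1) * ((b : ℝ) - 2) + (a : ℝ) * t) := by ring
    by_cases hb2 : 2 ≤ b
    · left
      have hb2R : (2 : ℝ) ≤ (b : ℝ) := by exact_mod_cast hb2
      nlinarith [mul_nonneg (by linarith : (0:ℝ) ≤ 3 * (t:ℝ) - 1) (sub_nonneg.mpr hb2R),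
        mul_nonneg (le_trans zero_le_one haR) (le_trans zero_le_one htR)]
    · right
      have : b = 1 := by omega
      simp [this]
  -- assemble
  have hmain0 : (∑ᶠ e' ∈ D2 G s(x, y), (zeta G e' s(x, y) : ℝ)) =
      ∑ e' ∈ hD2fin.toFinset, (zeta G e' s(x, y) : ℝ) := by
    exact finsum_mem_eq_finite_toFinset_sum _ hD2fin
  have hfirst : (∑ᶠ e' ∈ D2 G s(x, y), (zeta G e' s(x, y) : ℝ)) ≤
      ((b : ℝ) - 1) * (((a : ℝ) + t - 1) * b - 2 * t)
      + ((a : ℝ) - 1) * (((b : ℝ) + t - 1) * a - 2 * t)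
      + ((a : ℝ) - 1) * ((b : ℝ) - 1) * ((3 * (t : ℝ) - 1) * ((a : ℝ) - 2) + (b : ℝ) * t)
      + ((a : ℝ) - 1) * ((b : ℝ) - 1) * ((3 * (t : ℝ) - 1) * ((b : ℝ) - 2) + (a : ℝ) * t) := by
    rw [hmain0]
    have hnn : ∀ z : Sym2 (α ⊕ β), (0 : ℝ) ≤ (zeta G z s(x, y) : ℝ) :=
      fun z => Nat.cast_nonneg _
    calc ∑ e' ∈ hD2fin.toFinset, (zeta G e' s(x, y) : ℝ)
        ≤ ∑ e' ∈ (C1 ∪ C2) ∪ (C3 ∪ C4), (zeta G e' s(x, y) : ℝ) :=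
          Finset.sum_le_sum_of_subset_of_nonneg hcovF (fun i _ _ => hnn i)
      _ ≤ (∑ e' ∈ C1 ∪ C2, (zeta G e' s(x, y) : ℝ))
          + ∑ e' ∈ C3 ∪ C4, (zeta G e' s(x, y) : ℝ) :=
          StrongAux.sum_union_le_of_nonneg _ _ _ hnn
      _ ≤ ((∑ e' ∈ C1, (zeta G e' s(x, y) : ℝ)) + ∑ e' ∈ C2, (zeta G e' s(x, y) : ℝ))
          + ((∑ e' ∈ C3, (zeta G e' s(x, y) : ℝ)) + ∑ e' ∈ C4, (zeta G e' s(x, y) : ℝ)) :=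
          add_le_add (StrongAux.sum_union_le_of_nonneg _ _ _ hnn)
            (StrongAux.sum_union_le_of_nonneg _ _ _ hnn)
      _ ≤ _ := by linarith [hS1, hS2, hS3, hS4]
  refine ⟨hfirst, hfirst.trans ?_⟩
  nlinarith [mul_nonneg (mul_nonneg (sub_nonneg.mpr haR) (sub_nonneg.mpr hbR)) (sub_nonneg.mpr htR),
    mul_nonneg (sub_nonneg.mpr haR) (sub_nonneg.mpr hbR),
    mul_nonneg (sub_nonneg.mpr haR) (sub_nonneg.mpr htR),
    mul_nonneg (sub_nonneg.mpr hbR) (sub_nonneg.mpr htR),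
    mul_nonneg (mul_nonneg (mul_nonneg (sub_nonneg.mpr haR) (sub_nonneg.mpr haR)) (sub_nonneg.mpr hbR)) (sub_nonneg.mpr htR),
    sq_nonneg ((a : ℝ) - 1), sq_nonneg ((b : ℝ) - 1),
    mul_pos (lt_of_lt_of_le one_pos haR) (lt_of_lt_of_le one_pos htR)]
end

section
/- If H is an α-acyclic, k-uniform, linear hypergraph with at least one edge, then χ_I(H) = Δ(H) + k − 1. -/
structure FinHypergraph (V : Type*) where
  verts : Finset V
  edges : Finset (Finset V)
  edge_sub : ∀ s ∈ edges, s ⊆ verts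
  edge_nonempty : ∀ s ∈ edges, s.Nonempty

namespace FinHypergraph

variable {V : Type*} [DecidableEq V]

/-- The degree of a vertex: the number of edges containing it. -/
def degree (H : FinHypergraph V) (x : V) : ℕ :=
  (H.edges.filter fun s => x ∈ s).card

/-- Δ(H): the maximum degree. -/
def maxDegree (H : FinHypergraph V) : ℕ :=
  H.verts.sup H.degree

/-- r(H): the maximum cardinality of an edge. -/
def rank (H : FinHypergraph V) : ℕ :=
  H.edges.sup Finset.card

/-- An incidence of H: a pair (x, s) with s an edge and x ∈ s. -/
def IsIncidence (H : FinHypergraph V) (p : V × Finset V) : Prop :=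
  p.2 ∈ H.edges ∧ p.1 ∈ p.2

/-- Two (distinct) incidences (x,s), (x',s') are adjacent if x = x', or {x,x'} ⊆ s,
or {x,x'} ⊆ s'. -/
def IncAdj (p q : V × Finset V) : Prop :=
  p ≠ q ∧ (p.1 = q.1 ∨ ({p.1, q.1} : Finset V) ⊆ p.2 ∨ ({p.1, q.1} : Finset V) ⊆ q.2)

/-- A proper incidence k-coloring: adjacent incidences get distinct colors from {0, ..., k-1}. -/
def HasIncidenceColoring (H : FinHypergraph V) (k : ℕ) : Prop :=
  ∃ φ : V × Finset V → ℕ,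
    (∀ p, H.IsIncidence p → φ p < k) ∧
    (∀ p q, H.IsIncidence p → H.IsIncidence q → IncAdj p q → φ p ≠ φ q)

/-- χ_I(H): the incidence chromatic number. -/
noncomputable def incChromaticNumber (H : FinHypergraph V) : ℕ :=
  sInf {k | H.HasIncidenceColoring k}

/-- H is t-quasi-linear: two distinct edges meet in at most t vertices, and two
distinct vertices lie in at most t common edges. -/
def QuasiLinear (H : FinHypergraph V) (t : ℕ) : Prop :=
  (∀ s ∈ H.edges, ∀ s' ∈ H.edges, s ≠ s' → (s ∩ s').card ≤ t) ∧
  (∀ x ∈ H.verts, ∀ y ∈ H.verts, x ≠ y →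
    (H.edges.filter fun s => x ∈ s ∧ y ∈ s).card ≤ t)

/-- H is linear: two distinct edges meet in at most one vertex. -/
def Linear (H : FinHypergraph V) : Prop :=
  ∀ s ∈ H.edges, ∀ s' ∈ H.edges, s ≠ s' → (s ∩ s').card ≤ 1

/-- The Levi graph B(H): bipartite incidence graph between vertices and edges of H. -/
def Levi (H : FinHypergraph V) : SimpleGraph (V ⊕ Finset V) where
  Adj a b :=
    match a, b with
    | Sum.inl x, Sum.inr s => s ∈ H.edges ∧ x ∈ s
    | Sum.inr s, Sum.inl x => s ∈ H.edges ∧ x ∈ s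
    | _, _ => False
  symm := by
    constructor
    rintro (x | s) (y | t) h <;> exact h
  loopless := by
    constructor
    rintro (x | s) h <;> exact h

end FinHypergraph

/-- One step of GYO-reduction on a pair (vertex set, edge set):
(i) delete a vertex contained in only one edge (together with its occurrence in edges);
(ii) delete an edge contained in another edge;
(iii) delete an edge containing no vertex. -/
inductive GYOStep {V : Type*} [DecidableEq V] :
    Finset V × Finset (Finset V) → Finset V × Finset (Finset V) → Prop
  | delVertex (X : Finset V) (S : Finset (Finset V)) (x : V) (hx : x ∈ X)
      (h : (S.filter fun s => x ∈ s).card ≤ 1) :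
      GYOStep (X, S) (X.erase x, S.image fun s => s.erase x)
  | delSubEdge (X : Finset V) (S : Finset (Finset V)) (s s' : Finset V)
      (hs : s ∈ S) (hs' : s' ∈ S) (hne : s ≠ s') (hsub : s ⊆ s') :
      GYOStep (X, S) (X, S.erase s)
  | delEmptyEdge (X : Finset V) (S : Finset (Finset V)) (h : (∅ : Finset V) ∈ S) :
      GYOStep (X, S) (X, S.erase ∅)

/-- H is α-acyclic: GYO-reduction reduces it to the empty hypergraph. -/
def FinHypergraph.IsAlphaAcyclic {V : Type*} [DecidableEq V] (H : FinHypergraph V) : Prop :=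
  Relation.ReflTransGen GYOStep (H.verts, H.edges) (∅, ∅)

namespace AuxInc

open Finset

variable {V : Type*} [DecidableEq V]

/-- Forward invariant preserved by GYO steps. -/
def Inv (k Δ : ℕ) (S : Finset (Finset V)) : Prop :=
  (∀ t ∈ S, t.card ≤ k) ∧
  (∀ s ∈ S, ∀ s' ∈ S, s ≠ s' → (s ∩ s').card ≤ 1) ∧
  (∀ v : V, (S.filter fun s => v ∈ s).card ≤ Δ)

structure Conds (k N : ℕ) (S : Finset (Finset V)) (φ : V → Finset V → ℕ)
    (D : V → Finset ℕ) : Prop where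
  hDcard : ∀ v : V, (D v).card + 1 = k
  hDsub : ∀ v : V, D v ⊆ Finset.range N
  hlt : ∀ t ∈ S, ∀ v ∈ t, φ v t < N
  hnotD : ∀ t ∈ S, ∀ v ∈ t, φ v t ∉ D v
  hpal : ∀ t ∈ S, ∀ v ∈ t, ∀ w ∈ t, D v ∪ {φ v t} = D w ∪ {φ w t}
  hinj : ∀ t ∈ S, ∀ v ∈ t, ∀ w ∈ t, v ≠ w → φ v t ≠ φ w t
  hvert : ∀ v : V, ∀ t ∈ S, ∀ t' ∈ S, v ∈ t → v ∈ t' → t ≠ t' → φ v t ≠ φ v t'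

def Good (k N : ℕ) (S : Finset (Finset V)) : Prop :=
  ∃ φ D, Conds k N S φ D

lemma Conds.mono {k N : ℕ} {S S' : Finset (Finset V)} {φ : V → Finset V → ℕ}
    {D : V → Finset ℕ} (hSS : S ⊆ S') (h : Conds k N S' φ D) : Conds k N S φ D := by
  refine ⟨h.hDcard, h.hDsub, ?_, ?_, ?_, ?_, ?_⟩
  · exact fun t ht => h.hlt t (hSS ht)
  · exact fun t ht => h.hnotD t (hSS ht)
  · exact fun t ht => h.hpal t (hSS ht)
  · exact fun t ht => h.hinj t (hSS ht)
  · exact fun v t ht t' ht' => h.hvert v t (hSS ht) t' (hSS ht')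

lemma exists_fresh {N : ℕ} (A : Finset ℕ) (h : A.card < N) : ∃ c, c < N ∧ c ∉ A := by
  by_contra hc
  push_neg at hc
  have hsub : Finset.range N ⊆ A := fun c hcm => hc c (Finset.mem_range.mp hcm)
  have := Finset.card_le_card hsub
  simp only [Finset.card_range] at this
  omega

lemma filter_erase_deg (S : Finset (Finset V)) (s : Finset V) (hs : s ∈ S) (v : V)
    (hv : v ∈ s) :
    ((S.erase s).filter fun t => v ∈ t).card + 1 ≤ (S.filter fun t => v ∈ t).card := by
  have h1 : ((S.erase s).filter fun t => v ∈ t) = ((S.filter fun t => v ∈ t).erase s) := by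
    ext t
    simp only [Finset.mem_erase, Finset.mem_filter]
    tauto
  have hmem : s ∈ S.filter fun t => v ∈ t := Finset.mem_filter.mpr ⟨hs, hv⟩
  have hpos : 0 < (S.filter fun t => v ∈ t).card := Finset.card_pos.mpr ⟨s, hmem⟩
  rw [h1, Finset.card_erase_of_mem hmem]
  omega

/-- The key extension lemma: extend a coloring of `S.erase s0` to one of `S`. -/
lemma Conds.extend {k N : ℕ} {S : Finset (Finset V)} {s0 : Finset V} (hs0 : s0 ∈ S)
    {φ' : V → Finset V → ℕ} {D' D : V → Finset ℕ} {ψ : V → ℕ}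
    (h' : Conds k N (S.erase s0) φ' D')
    (c1 : ∀ v : V, (D v).card + 1 = k)
    (c2 : ∀ v : V, D v ⊆ Finset.range N)
    (c3 : ∀ v ∈ s0, ψ v < N)
    (c4 : ∀ v ∈ s0, ψ v ∉ D v)
    (c5 : ∀ v ∈ s0, ∀ w ∈ s0, D v ∪ {ψ v} = D w ∪ {ψ w})
    (c6 : ∀ v ∈ s0, ∀ w ∈ s0, v ≠ w → ψ v ≠ ψ w)
    (c7 : ∀ v ∈ s0, ∀ t ∈ S.erase s0, v ∈ t → ψ v ≠ φ' v t)
    (c8 : ∀ w : V, ∀ t ∈ S.erase s0, w ∈ t → D w = D' w) :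
    Conds k N S (fun w t => if t = s0 then ψ w else φ' w t) D := by
  have hmem : ∀ t ∈ S, t = s0 ∨ t ∈ S.erase s0 := by
    intro t ht
    by_cases h : t = s0
    · exact Or.inl h
    · exact Or.inr (Finset.mem_erase.mpr ⟨h, ht⟩)
  constructor
  · exact c1
  · exact c2
  · intro t ht v hv
    rcases hmem t ht with rfl | htT
    · simpa using c3 v hv
    · have hts : t ≠ s0 := (Finset.mem_erase.mp htT).1
      simpa [hts] using h'.hlt t htT v hv
  · intro t ht v hv
    rcases hmem t ht with rfl | htT
    · simpa using c4 v hv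
    · have hts : t ≠ s0 := (Finset.mem_erase.mp htT).1
      rw [c8 v t htT hv]
      simpa [hts] using h'.hnotD t htT v hv
  · intro t ht v hv w hw
    rcases hmem t ht with rfl | htT
    · simpa using c5 v hv w hw
    · have hts : t ≠ s0 := (Finset.mem_erase.mp htT).1
      rw [c8 v t htT hv, c8 w t htT hw]
      simpa [hts] using h'.hpal t htT v hv w hw
  · intro t ht v hv w hw hvw
    rcases hmem t ht with rfl | htT
    · simpa using c6 v hv w hw hvw
    · have hts : t ≠ s0 := (Finset.mem_erase.mp htT).1
      simpa [hts] using h'.hinj t htT v hv w hw hvw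
  · intro v t ht t' ht' hvt hvt' htt'
    rcases hmem t ht with h1 | htT <;> rcases hmem t' ht' with h2 | ht'T
    · exact absurd (h1.trans h2.symm) htt'
    · have hts' : t' ≠ s0 := (Finset.mem_erase.mp ht'T).1
      subst h1
      simpa [hts'] using c7 v hvt t' ht'T hvt'
    · have hts : t ≠ s0 := (Finset.mem_erase.mp htT).1
      subst h2
      simpa [hts] using (c7 v hvt' t htT hvt).symm
    · have hts : t ≠ s0 := (Finset.mem_erase.mp htT).1
      have hts' : t' ≠ s0 := (Finset.mem_erase.mp ht'T).1
      simpa [hts, hts'] using h'.hvert v t htT t' ht'T hvt hvt' htt'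

lemma inv_sub {k Δ : ℕ} {S S' : Finset (Finset V)} (hsub : S' ⊆ S) (h : Inv k Δ S) :
    Inv k Δ S' := by
  obtain ⟨h1, h2, h3⟩ := h
  refine ⟨fun t ht => h1 t (hsub ht), fun s hs s' hs' => h2 s (hsub hs) s' (hsub hs'), ?_⟩
  intro v
  exact le_trans (Finset.card_le_card (Finset.filter_subset_filter _ hsub)) (h3 v)

lemma inv_step {k Δ : ℕ} {P Q : Finset V × Finset (Finset V)} (hstep : GYOStep P Q)
    (h : Inv k Δ P.2) : Inv k Δ Q.2 := by
  cases hstep with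
  | delVertex X S x hx hcard =>
    obtain ⟨h1, h2, h3⟩ := h
    refine ⟨?_, ?_, ?_⟩
    · intro t ht
      simp only [Finset.mem_image] at ht
      obtain ⟨s, hs, rfl⟩ := ht
      exact le_trans (Finset.card_le_card (Finset.erase_subset _ _)) (h1 s hs)
    · intro t ht t' ht' hne
      simp only [Finset.mem_image] at ht ht'
      obtain ⟨s, hs, rfl⟩ := ht
      obtain ⟨s', hs', rfl⟩ := ht'
      have hss' : s ≠ s' := by rintro rfl; exact hne rfl
      calc ((s.erase x) ∩ (s'.erase x)).card ≤ (s ∩ s').card :=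
            Finset.card_le_card (Finset.inter_subset_inter (Finset.erase_subset _ _)
              (Finset.erase_subset _ _))
        _ ≤ 1 := h2 s hs s' hs' hss'
    · intro v
      have hsub : ((S.image fun s => s.erase x).filter fun s => v ∈ s) ⊆
          (S.filter fun s => v ∈ s).image fun s => s.erase x := by
        intro t ht
        simp only [Finset.mem_filter, Finset.mem_image] at ht ⊢
        obtain ⟨⟨s, hs, rfl⟩, hv⟩ := ht
        exact ⟨s, ⟨hs, Finset.mem_of_mem_erase hv⟩, rfl⟩
      calc ((S.image fun s => s.erase x).filter fun s => v ∈ s).card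
          ≤ ((S.filter fun s => v ∈ s).image fun s => s.erase x).card :=
            Finset.card_le_card hsub
        _ ≤ (S.filter fun s => v ∈ s).card := Finset.card_image_le
        _ ≤ Δ := h3 v
  | delSubEdge X S s s' hs hs' hne hsub => exact inv_sub (Finset.erase_subset _ _) h
  | delEmptyEdge X S hemp => exact inv_sub (Finset.erase_subset _ _) h



lemma good_delEmpty {k N : ℕ} {S : Finset (Finset V)} (hemp : (∅ : Finset V) ∈ S)
    (hgood : Good k N (S.erase ∅)) : Good k N S := by
  obtain ⟨φ', D', h'⟩ := hgood
  refine ⟨_, _, Conds.extend hemp (ψ := fun _ => 0) h' h'.hDcard h'.hDsub ?_ ?_ ?_ ?_ ?_ ?_⟩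
  all_goals simp

lemma good_delSub {k Δ N : ℕ} (hk : 1 ≤ k) (hΔ : 1 ≤ Δ) (hN : Δ + k = N + 1)
    {S : Finset (Finset V)} {s s' : Finset V}
    (hs : s ∈ S) (hs' : s' ∈ S) (hne : s ≠ s') (hsub : s ⊆ s')
    (hinv : Inv k Δ S) (hgood : Good k N (S.erase s)) : Good k N S := by
  have hcard1 : s.card ≤ 1 := by
    have := hinv.2.1 s hs s' hs' hne
    rwa [Finset.inter_eq_left.mpr hsub] at this
  obtain ⟨φ', D', h'⟩ := hgood
  rcases Finset.eq_empty_or_nonempty s with rfl | ⟨v, hv⟩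
  · exact good_delEmpty hs ⟨φ', D', h'⟩
  · have hsv : s = {v} := by
      apply Finset.eq_singleton_iff_unique_mem.mpr
      refine ⟨hv, fun w hw => ?_⟩
      have := Finset.card_le_one.mp hcard1 w hw v hv
      exact this
    -- pick a fresh color
    have hdeg : ((S.erase s).filter fun t => v ∈ t).card + 1 ≤ Δ :=
      le_trans (filter_erase_deg S s hs v hv) (hinv.2.2 v)
    set A : Finset ℕ :=
      D' v ∪ ((S.erase s).filter fun t => v ∈ t).image (fun t => φ' v t) with hA
    have hAcard : A.card < N := by
      rw [hA]
      have h1 := Finset.card_union_le (D' v)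
        (((S.erase s).filter fun t => v ∈ t).image (fun t => φ' v t))
      have h2 : (((S.erase s).filter fun t => v ∈ t).image (fun t => φ' v t)).card ≤
          ((S.erase s).filter fun t => v ∈ t).card := Finset.card_image_le
      have h3 := h'.hDcard v
      omega
    obtain ⟨c, hcN, hcA⟩ := exists_fresh A hAcard
    have hcD : c ∉ D' v := fun h => hcA (Finset.mem_union_left _ h)
    refine ⟨_, _, Conds.extend hs (ψ := fun _ => c) (D := D') h'
      h'.hDcard h'.hDsub ?_ ?_ ?_ ?_ ?_ ?_⟩
    · intro w hw; exact hcN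
    · intro w hw
      rw [hsv, Finset.mem_singleton] at hw; subst hw; exact hcD
    · intro w hw w' hw'
      rw [hsv, Finset.mem_singleton] at hw hw'; subst hw; subst hw'; rfl
    · intro w hw w' hw' hww'
      rw [hsv, Finset.mem_singleton] at hw hw'; exact absurd (hw.trans hw'.symm) hww'
    · intro w hw t ht hwt
      rw [hsv, Finset.mem_singleton] at hw; subst hw
      intro hcontra
      exact hcA (Finset.mem_union_right _ (Finset.mem_image.mpr
        ⟨t, Finset.mem_filter.mpr ⟨ht, hwt⟩, hcontra.symm⟩))
    · intro w t ht hwt; rfl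

lemma good_delVertex {k Δ N : ℕ} (hk : 1 ≤ k) (hΔ : 1 ≤ Δ) (hN : Δ + k = N + 1)
    {S : Finset (Finset V)} {x : V}
    (hcard : (S.filter fun s => x ∈ s).card ≤ 1)
    (hinv : Inv k Δ S) (hgood : Good k N (S.image fun s => s.erase x)) : Good k N S := by
  by_cases hex : ∃ s0 ∈ S, x ∈ s0
  case neg =>
    have himg : (S.image fun s => s.erase x) = S := by
      rw [Finset.image_congr (g := id), Finset.image_id]
      intro t ht
      exact Finset.erase_eq_of_notMem (fun hc => hex ⟨t, ht, hc⟩)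
    rwa [himg] at hgood
  case pos =>
  obtain ⟨s0, hs0, hxs0⟩ := hex
  have huniq : ∀ t ∈ S, x ∈ t → t = s0 := by
    intro t ht hxt
    exact Finset.card_le_one.mp hcard t (Finset.mem_filter.mpr ⟨ht, hxt⟩) s0
      (Finset.mem_filter.mpr ⟨hs0, hxs0⟩)
  have hnotin : ∀ t ∈ S.erase s0, x ∉ t := by
    intro t ht hxt
    exact (Finset.mem_erase.mp ht).1 (huniq t (Finset.mem_erase.mp ht).2 hxt)
  have himg : (S.image fun s => s.erase x) = insert (s0.erase x) (S.erase s0) := by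
    conv_lhs => rw [← Finset.insert_erase hs0]
    rw [Finset.image_insert]
    congr 1
    rw [Finset.image_congr (g := id), Finset.image_id]
    intro t ht
    exact Finset.erase_eq_of_notMem (hnotin t ht)
  rw [himg] at hgood
  obtain ⟨φ', D', h'⟩ := hgood
  have h'T : Conds k N (S.erase s0) φ' D' :=
    h'.mono (Finset.subset_insert _ _)
  have hins : insert x (s0.erase x) = s0 := Finset.insert_erase hxs0
  by_cases h0 : s0.erase x = ∅
  case pos =>
    -- s0 = {x}
    have hs0x : s0 = {x} := by rw [← hins, h0]; rfl
    have hDx := h'.hDcard x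
    obtain ⟨c, hcN, hcD⟩ := exists_fresh (N := N) (D' x) (by omega)
    refine ⟨_, _, Conds.extend hs0 (ψ := fun _ => c) (D := D') h'T
      h'.hDcard h'.hDsub ?_ ?_ ?_ ?_ ?_ ?_⟩
    · intro w hw; exact hcN
    · intro w hw
      rw [hs0x, Finset.mem_singleton] at hw; subst hw; exact hcD
    · intro w hw w' hw'
      rw [hs0x, Finset.mem_singleton] at hw hw'; subst hw; subst hw'; rfl
    · intro w hw w' hw' hww'
      rw [hs0x, Finset.mem_singleton] at hw hw'; exact absurd (hw.trans hw'.symm) hww'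
    · intro w hw t ht hwt
      rw [hs0x, Finset.mem_singleton] at hw; subst hw
      exact absurd hwt (hnotin t ht)
    · intro w t ht hwt; rfl
  case neg =>
  obtain ⟨v0, hv0⟩ := Finset.nonempty_of_ne_empty h0
  have hxv0 : v0 ≠ x := (Finset.mem_erase.mp hv0).1
  have hcs0 : s0.card ≤ k := hinv.1 s0 hs0
  have hcs0' : (s0.erase x).card + 1 = s0.card := by
    rw [Finset.card_erase_of_mem hxs0]
    have : 0 < s0.card := Finset.card_pos.mpr ⟨x, hxs0⟩
    omega
  by_cases hmerge : s0.erase x ∈ S.erase s0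
  case pos =>
    -- merge case: s0.erase x = {v} for some v, and it is an edge of S.erase s0
    have hs0'S : s0.erase x ∈ S := (Finset.mem_erase.mp hmerge).2
    have hne : s0 ≠ s0.erase x := by
      intro hc
      exact (Finset.notMem_erase x s0) (hc ▸ hxs0)
    have hint : (s0 ∩ s0.erase x).card ≤ 1 := hinv.2.1 s0 hs0 _ hs0'S hne
    rw [Finset.inter_eq_right.mpr (Finset.erase_subset _ _)] at hint
    have hv0eq : s0.erase x = {v0} := by
      apply Finset.eq_singleton_iff_unique_mem.mpr
      exact ⟨hv0, fun w hw => Finset.card_le_one.mp hint w hw v0 hv0⟩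
    have hmemi : ∀ w, w ∈ s0 ↔ w = x ∨ w = v0 := by
      intro w
      rw [← hins, hv0eq]
      simp [Finset.mem_insert]
    have hk2 : 2 ≤ k := by
      have : 2 ≤ s0.card := by
        rw [← hins]
        rw [Finset.card_insert_of_notMem (Finset.notMem_erase x s0), hv0eq]
        simp
      omega
    -- fresh color c for (v0, s0)
    have hdeg : ((S.erase s0).filter fun t => v0 ∈ t).card + 1 ≤ Δ :=
      le_trans (filter_erase_deg S s0 hs0 v0 ((hmemi v0).mpr (Or.inr rfl)))
        (hinv.2.2 v0)
    set A : Finset ℕ :=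
      D' v0 ∪ ((S.erase s0).filter fun t => v0 ∈ t).image (fun t => φ' v0 t) with hA
    have hAcard : A.card < N := by
      rw [hA]
      have h1 := Finset.card_union_le (D' v0)
        (((S.erase s0).filter fun t => v0 ∈ t).image (fun t => φ' v0 t))
      have h2 : (((S.erase s0).filter fun t => v0 ∈ t).image (fun t => φ' v0 t)).card ≤
          ((S.erase s0).filter fun t => v0 ∈ t).card := Finset.card_image_le
      have h3 := h'.hDcard v0
      omega
    obtain ⟨c, hcN, hcA⟩ := exists_fresh A hAcard
    have hcD : c ∉ D' v0 := fun h => hcA (Finset.mem_union_left _ h)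
    -- old color e ∈ D' v0 for (x, s0)
    have hDne : (D' v0).Nonempty := by
      rw [← Finset.card_pos]
      have := h'.hDcard v0
      omega
    obtain ⟨e, he⟩ := hDne
    have henec : e ≠ c := fun hc => hcD (hc ▸ he)
    have hkey : insert c ((D' v0).erase e) ∪ {e} = D' v0 ∪ {c} := by
      ext a
      simp only [Finset.mem_union, Finset.mem_insert, Finset.mem_erase,
        Finset.mem_singleton]
      constructor
      · rintro ((rfl | ⟨-, ha⟩) | rfl)
        · exact Or.inr rfl
        · exact Or.inl ha
        · exact Or.inl he
      · rintro (ha | rfl)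
        · by_cases hae : a = e
          · exact Or.inr hae
          · exact Or.inl (Or.inr ⟨hae, ha⟩)
        · exact Or.inl (Or.inl rfl)
    refine ⟨_, _, Conds.extend hs0
      (ψ := fun w => if w = x then e else c)
      (D := fun w => if w = x then insert c ((D' v0).erase e) else D' w) h'T
      ?_ ?_ ?_ ?_ ?_ ?_ ?_ ?_⟩
    · intro w
      by_cases hw : w = x
      · have hnm : c ∉ (D' v0).erase e := fun hc => hcD (Finset.mem_of_mem_erase hc)
        simp only [if_pos hw]
        rw [Finset.card_insert_of_notMem hnm, Finset.card_erase_of_mem he]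
        have := h'.hDcard v0
        omega
      · simp only [if_neg hw]; exact h'.hDcard w
    · intro w
      by_cases hw : w = x
      · simp only [if_pos hw]
        intro a ha
        rcases Finset.mem_insert.mp ha with rfl | ha
        · exact Finset.mem_range.mpr hcN
        · exact h'.hDsub v0 (Finset.mem_of_mem_erase ha)
      · simp only [if_neg hw]; exact h'.hDsub w
    · intro w hw
      rcases (hmemi w).mp hw with rfl | rfl
      · simp only [if_pos rfl]
        exact Finset.mem_range.mp (h'.hDsub v0 he)
      · simp only [if_neg hxv0]; exact hcN
    · intro w hw
      rcases (hmemi w).mp hw with rfl | rfl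
      · simp only [if_pos rfl]
        intro hc
        rcases Finset.mem_insert.mp hc with h | h
        · exact henec h
        · exact (Finset.notMem_erase e _) h
      · simp only [if_neg hxv0]; exact hcD
    · intro w hw w' hw'
      have key : ∀ u ∈ s0, (if u = x then insert c ((D' v0).erase e) else D' u) ∪
          {if u = x then e else c} = D' v0 ∪ {c} := by
        intro u hu
        rcases (hmemi u).mp hu with rfl | rfl
        · simp only [if_pos rfl]; exact hkey
        · simp only [if_neg hxv0]
      rw [key w hw, key w' hw']
    · intro w hw w' hw' hww'
      rcases (hmemi w).mp hw with rfl | rfl <;> rcases (hmemi w').mp hw' with rfl | rfl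
      · exact absurd rfl hww'
      · simp only [if_pos rfl, if_neg hxv0]; exact henec
      · simp only [if_pos rfl, if_neg hxv0]; exact fun h => henec h.symm
      · exact absurd rfl hww'
    · intro w hw t ht hwt
      have hwx : w ≠ x := fun hc => (hnotin t ht) (hc ▸ hwt)
      have hwv : w = v0 := by
        rcases (hmemi w).mp hw with rfl | rfl
        · exact absurd rfl hwx
        · rfl
      subst hwv
      simp only [if_neg hwx]
      intro hc
      exact hcA (Finset.mem_union_right _ (Finset.mem_image.mpr
        ⟨t, Finset.mem_filter.mpr ⟨ht, hwt⟩, hc.symm⟩))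
    · intro w t ht hwt
      have hwx : w ≠ x := fun hc => (hnotin t ht) (hc ▸ hwt)
      simp only [if_neg hwx]
  case neg =>
    -- no merge: s0.erase x is a genuinely new edge of the image
    have h's : s0.erase x ∈ insert (s0.erase x) (S.erase s0) := Finset.mem_insert_self _ _
    set E : Finset ℕ := D' v0 ∪ {φ' v0 (s0.erase x)} with hE
    have hphiD : φ' v0 (s0.erase x) ∉ D' v0 := h'.hnotD _ h's v0 hv0
    have hEcard : E.card = k := by
      rw [hE]
      have : D' v0 ∪ {φ' v0 (s0.erase x)} = insert (φ' v0 (s0.erase x)) (D' v0) := by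
        ext a
        simp only [Finset.mem_union, Finset.mem_singleton, Finset.mem_insert]
        tauto
      rw [this, Finset.card_insert_of_notMem hphiD]
      have := h'.hDcard v0
      omega
    have hEsub : E ⊆ Finset.range N := by
      rw [hE]
      apply Finset.union_subset (h'.hDsub v0)
      simp only [Finset.singleton_subset_iff, Finset.mem_range]
      exact h'.hlt _ h's v0 hv0
    have hCE : ∀ w ∈ s0.erase x, φ' w (s0.erase x) ∈ E := by
      intro w hw
      have := h'.hpal _ h's w hw v0 hv0
      rw [hE, ← this]
      exact Finset.mem_union_right _ (Finset.mem_singleton_self _)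
    have hDE : ∀ w ∈ s0.erase x, D' w ∪ {φ' w (s0.erase x)} = E := by
      intro w hw
      rw [hE]; exact h'.hpal _ h's w hw v0 hv0
    set C : Finset ℕ := (s0.erase x).image (fun w => φ' w (s0.erase x)) with hC
    have hfresh : ∃ c ∈ E, c ∉ C := by
      by_contra hcon
      push_neg at hcon
      have hsub : E ⊆ C := hcon
      have h1 := Finset.card_le_card hsub
      have h2 : C.card ≤ (s0.erase x).card := Finset.card_image_le
      omega
    obtain ⟨c, hcE, hcC⟩ := hfresh
    refine ⟨_, _, Conds.extend hs0
      (ψ := fun w => if w = x then c else φ' w (s0.erase x))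
      (D := fun w => if w = x then E.erase c else D' w) h'T
      ?_ ?_ ?_ ?_ ?_ ?_ ?_ ?_⟩
    · intro w
      by_cases hw : w = x
      · simp only [if_pos hw]
        rw [Finset.card_erase_of_mem hcE]
        omega
      · simp only [if_neg hw]; exact h'.hDcard w
    · intro w
      by_cases hw : w = x
      · simp only [if_pos hw]
        exact fun a ha => hEsub (Finset.mem_of_mem_erase ha)
      · simp only [if_neg hw]; exact h'.hDsub w
    · intro w hw
      by_cases hwx : w = x
      · simp only [if_pos hwx]
        exact Finset.mem_range.mp (hEsub hcE)
      · simp only [if_neg hwx]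
        exact h'.hlt _ h's w (Finset.mem_erase.mpr ⟨hwx, hw⟩)
    · intro w hw
      by_cases hwx : w = x
      · simp only [if_pos hwx]
        exact Finset.notMem_erase _ _
      · simp only [if_neg hwx]
        exact h'.hnotD _ h's w (Finset.mem_erase.mpr ⟨hwx, hw⟩)
    · intro w hw w' hw'
      have key : ∀ u ∈ s0, (if u = x then E.erase c else D' u) ∪
          {if u = x then c else φ' u (s0.erase x)} = E := by
        intro u hu
        by_cases hux : u = x
        · simp only [if_pos hux]
          ext a
          simp only [Finset.mem_union, Finset.mem_erase, Finset.mem_singleton]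
          constructor
          · rintro (⟨-, ha⟩ | rfl)
            · exact ha
            · exact hcE
          · intro ha
            by_cases hac : a = c
            · exact Or.inr hac
            · exact Or.inl ⟨hac, ha⟩
        · simp only [if_neg hux]
          exact hDE u (Finset.mem_erase.mpr ⟨hux, hu⟩)
      rw [key w hw, key w' hw']
    · intro w hw w' hw' hww'
      by_cases hwx : w = x <;> by_cases hw'x : w' = x
      · exact absurd (hwx.trans hw'x.symm) hww'
      · simp only [if_pos hwx, if_neg hw'x]
        intro hc
        exact hcC (hC ▸ Finset.mem_image.mpr
          ⟨w', Finset.mem_erase.mpr ⟨hw'x, hw'⟩, hc.symm⟩)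
      · simp only [if_pos hw'x, if_neg hwx]
        intro hc
        exact hcC (hC ▸ Finset.mem_image.mpr
          ⟨w, Finset.mem_erase.mpr ⟨hwx, hw⟩, hc⟩)
      · simp only [if_neg hwx, if_neg hw'x]
        exact h'.hinj _ h's w (Finset.mem_erase.mpr ⟨hwx, hw⟩) w'
          (Finset.mem_erase.mpr ⟨hw'x, hw'⟩) hww'
    · intro w hw t ht hwt
      have hwx : w ≠ x := fun hc => (hnotin t ht) (hc ▸ hwt)
      simp only [if_neg hwx]
      have hts0' : s0.erase x ≠ t := by
        intro hc
        exact hmerge (hc ▸ ht)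
      exact h'.hvert w _ h's t (Finset.mem_insert_of_mem ht)
        (Finset.mem_erase.mpr ⟨hwx, hw⟩) hwt hts0'
    · intro w t ht hwt
      have hwx : w ≠ x := fun hc => (hnotin t ht) (hc ▸ hwt)
      simp only [if_neg hwx]

lemma good_step {k Δ N : ℕ} (hk : 1 ≤ k) (hΔ : 1 ≤ Δ) (hN : Δ + k = N + 1)
    {P Q : Finset V × Finset (Finset V)} (hstep : GYOStep P Q)
    (hinv : Inv k Δ P.2) (hgood : Good k N Q.2) : Good k N P.2 := by
  cases hstep with
  | delVertex X S x hx h => exact good_delVertex hk hΔ hN h hinv hgood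
  | delSubEdge X S s s' hs hs' hne hsub =>
      exact good_delSub hk hΔ hN hs hs' hne hsub hinv hgood
  | delEmptyEdge X S h => exact good_delEmpty h hgood

lemma good_empty {k N : ℕ} (hk : 1 ≤ k) (hkN : k ≤ N + 1) :
    Good k N (∅ : Finset (Finset V)) := by
  refine ⟨fun _ _ => 0, fun _ => Finset.range (k - 1), ?_, ?_, ?_, ?_, ?_, ?_, ?_⟩
  · intro v; rw [Finset.card_range]; omega
  · intro v; exact Finset.range_subset_range.mpr (by omega)
  · intro t ht; exact absurd ht (Finset.notMem_empty t)
  · intro t ht; exact absurd ht (Finset.notMem_empty t)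
  · intro t ht; exact absurd ht (Finset.notMem_empty t)
  · intro t ht; exact absurd ht (Finset.notMem_empty t)
  · intro v t ht; exact absurd ht (Finset.notMem_empty t)

lemma good_chain {k Δ N : ℕ} (hk : 1 ≤ k) (hΔ : 1 ≤ Δ) (hN : Δ + k = N + 1)
    (P : Finset V × Finset (Finset V))
    (hrtg : Relation.ReflTransGen GYOStep P ((∅ : Finset V), (∅ : Finset (Finset V))))
    (hinv : Inv k Δ P.2) : Good k N P.2 := by
  induction hrtg using Relation.ReflTransGen.head_induction_on with
  | refl => exact good_empty hk (by omega)
  | head hstep htail ih =>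
      exact good_step hk hΔ hN hstep hinv (ih (inv_step hstep hinv))

end AuxInc

theorem statement_19 {V : Type*} [DecidableEq V] (H : FinHypergraph V) (k : ℕ)
    (hac : H.IsAlphaAcyclic) (huniform : ∀ s ∈ H.edges, s.card = k)
    (hlin : H.Linear) (hne : H.edges.Nonempty) :
    H.incChromaticNumber = H.maxDegree + k - 1 := by
  classical
  obtain ⟨s, hs⟩ := hne
  obtain ⟨v, hv⟩ := H.edge_nonempty s hs
  have hvV : v ∈ H.verts := H.edge_sub s hs hv
  have hk : 1 ≤ k := by
    have h1 := huniform s hs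
    have h2 : 0 < s.card := Finset.card_pos.mpr ⟨v, hv⟩
    omega
  have hdegv : 1 ≤ H.degree v :=
    Finset.card_pos.mpr ⟨s, Finset.mem_filter.mpr ⟨hs, hv⟩⟩
  have hsup : H.degree v ≤ H.verts.sup H.degree := Finset.le_sup hvV
  have hΔ : 1 ≤ H.maxDegree := le_trans hdegv hsup
  set Δ := H.maxDegree with hΔdef
  set N := Δ + (k - 1) with hNdef
  have hN : Δ + k = N + 1 := by omega
  -- the forward invariant holds for H
  have hInv : AuxInc.Inv k Δ H.edges := by
    refine ⟨fun t ht => le_of_eq (huniform t ht), hlin, ?_⟩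
    intro w
    by_cases hw : w ∈ H.verts
    · exact Finset.le_sup (f := H.degree) hw
    · have : (H.edges.filter fun s => w ∈ s) = ∅ := by
        apply Finset.filter_eq_empty_iff.mpr
        intro t ht hwt
        exact hw (H.edge_sub t ht hwt)
      rw [this]
      simp
  -- upper bound : a coloring with N colors
  obtain ⟨φ, D, hC⟩ := AuxInc.good_chain hk hΔ hN (H.verts, H.edges) hac hInv
  have hcol : H.HasIncidenceColoring N := by
    refine ⟨fun p => φ p.1 p.2, ?_, ?_⟩
    · intro p hp
      exact hC.hlt p.2 hp.1 p.1 hp.2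
    · intro p q hp hq hadj
      obtain ⟨hnepq, hadj⟩ := hadj
      show φ p.1 p.2 ≠ φ q.1 q.2
      have cross : ∀ (x y : V) (s t : Finset V), s ∈ H.edges → t ∈ H.edges →
          x ∈ s → y ∈ s → y ∈ t → ¬(x = y ∧ s = t) → φ x s ≠ φ y t := by
        intro x y s t hsE htE hxs hys hyt hnot
        by_cases hxy : x = y
        · subst hxy
          have hst : s ≠ t := fun h => hnot ⟨rfl, h⟩
          exact hC.hvert x s hsE t htE hxs hyt hst
        · by_cases hst : s = t
          · subst hst
            exact hC.hinj s hsE x hxs y hys hxy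
          · have h1 : φ y t ∉ D y := hC.hnotD t htE y hyt
            have h2 : φ y t ≠ φ y s := hC.hvert y t htE s hsE hyt hys (Ne.symm hst)
            have h3 : φ x s ∈ D y ∪ {φ y s} := by
              have hmem : φ x s ∈ D x ∪ {φ x s} :=
                Finset.mem_union_right _ (Finset.mem_singleton_self _)
              rwa [hC.hpal s hsE x hxs y hys] at hmem
            intro hcontra
            rw [hcontra] at h3
            rcases Finset.mem_union.mp h3 with h | h
            · exact h1 h
            · exact h2 (Finset.mem_singleton.mp h)
      rcases hadj with h1 | h2 | h3
      · -- same vertex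
        have hst : p.2 ≠ q.2 := by
          intro hc
          exact hnepq (Prod.ext h1 hc)
        have := hC.hvert p.1 p.2 hp.1 q.2 hq.1 hp.2 (h1 ▸ hq.2) hst
        rw [← h1]
        exact this
      · -- {p.1, q.1} ⊆ p.2
        have hq1p2 : q.1 ∈ p.2 :=
          h2 (Finset.mem_insert_of_mem (Finset.mem_singleton_self _))
        exact cross p.1 q.1 p.2 q.2 hp.1 hq.1 hp.2 hq1p2 hq.2
          (fun ⟨ha, hb⟩ => hnepq (Prod.ext ha hb))
      · -- {p.1, q.1} ⊆ q.2
        have hp1q2 : p.1 ∈ q.2 :=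
          h3 (Finset.mem_insert_self _ _)
        exact (cross q.1 p.1 q.2 p.2 hq.1 hp.1 hq.2 hp1q2 hp.2
          (fun ⟨ha, hb⟩ => hnepq (Prod.ext ha.symm hb.symm))).symm
  -- lower bound
  have hlow : ∀ m : ℕ, H.HasIncidenceColoring m → N ≤ m := by
    intro m hm
    obtain ⟨ψ, hψ1, hψ2⟩ := hm
    obtain ⟨x, hxV, hxsup⟩ := Finset.exists_mem_eq_sup H.verts ⟨v, hvV⟩ H.degree
    have hΔx : 1 ≤ H.degree x := le_trans (le_trans hdegv hsup) (le_of_eq hxsup)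
    obtain ⟨s0, hs0f⟩ := Finset.card_pos.mp hΔx
    have hs0 : s0 ∈ H.edges := (Finset.mem_filter.mp hs0f).1
    have hxs0 : x ∈ s0 := (Finset.mem_filter.mp hs0f).2
    set A := (H.edges.filter fun t => x ∈ t).image (fun t => ((x, t) : V × Finset V))
      with hA
    set B := (s0.erase x).image (fun y => ((y, s0) : V × Finset V)) with hB
    have hAcard : A.card = H.degree x := by
      rw [hA, Finset.card_image_of_injective _
        (fun a b hab => ((Prod.mk.injEq _ _ _ _).mp hab).2)]
      rfl
    have hBcard : B.card = k - 1 := by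
      rw [hB, Finset.card_image_of_injective _
        (fun a b hab => ((Prod.mk.injEq _ _ _ _).mp hab).1),
        Finset.card_erase_of_mem hxs0, huniform s0 hs0]
    have hdisj : Disjoint A B := by
      rw [Finset.disjoint_left]
      intro p hpA hpB
      rw [hA, Finset.mem_image] at hpA
      rw [hB, Finset.mem_image] at hpB
      obtain ⟨t, ht, rfl⟩ := hpA
      obtain ⟨y, hy, hyp⟩ := hpB
      have hyx : y = x := ((Prod.mk.injEq _ _ _ _).mp hyp).1
      exact (Finset.mem_erase.mp hy).1 hyx
    have hchar : ∀ p ∈ A ∪ B, (p.2 ∈ H.edges ∧ p.1 ∈ p.2) ∧ (p.1 = x ∨ p.2 = s0) := by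
      intro p hp
      rcases Finset.mem_union.mp hp with hpA | hpB
      · rw [hA, Finset.mem_image] at hpA
        obtain ⟨t, ht, rfl⟩ := hpA
        exact ⟨⟨(Finset.mem_filter.mp ht).1, (Finset.mem_filter.mp ht).2⟩, Or.inl rfl⟩
      · rw [hB, Finset.mem_image] at hpB
        obtain ⟨y, hy, rfl⟩ := hpB
        exact ⟨⟨hs0, Finset.mem_of_mem_erase hy⟩, Or.inr rfl⟩
    have hinc : ∀ p ∈ A ∪ B, H.IsIncidence p := fun p hp => (hchar p hp).1
    have hinj : Set.InjOn ψ ↑(A ∪ B) := by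
      intro p hp q hq hpq
      by_contra hne'
      have hpm : p ∈ A ∪ B := hp
      have hqm : q ∈ A ∪ B := hq
      have hadj : FinHypergraph.IncAdj p q := by
        refine ⟨hne', ?_⟩
        rcases (hchar p hpm).2 with hp1 | hp2 <;> rcases (hchar q hqm).2 with hq1 | hq2
        · exact Or.inl (hp1.trans hq1.symm)
        · refine Or.inr (Or.inr ?_)
          rw [hq2]
          refine Finset.insert_subset_iff.mpr ⟨?_, Finset.singleton_subset_iff.mpr ?_⟩
          · rw [hp1]; exact hxs0
          · rw [← hq2]; exact (hchar q hqm).1.2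
        · refine Or.inr (Or.inl ?_)
          rw [hp2]
          refine Finset.insert_subset_iff.mpr ⟨?_, Finset.singleton_subset_iff.mpr ?_⟩
          · rw [← hp2]; exact (hchar p hpm).1.2
          · rw [hq1]; exact hxs0
        · refine Or.inr (Or.inl ?_)
          rw [hp2]
          refine Finset.insert_subset_iff.mpr ⟨?_, Finset.singleton_subset_iff.mpr ?_⟩
          · rw [← hp2]; exact (hchar p hpm).1.2
          · rw [← hq2]; exact (hchar q hqm).1.2
      exact hψ2 p q (hinc p hpm) (hinc q hqm) hadj hpq
    have hcount := Finset.card_le_card_of_injOn ψ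
      (fun p hp => Finset.mem_range.mpr (hψ1 p (hinc p hp))) hinj
    rw [Finset.card_union_of_disjoint hdisj, hAcard, hBcard, Finset.card_range] at hcount
    have : Δ = H.degree x := hxsup
    omega
  -- conclude
  have hchrom : H.incChromaticNumber = N := by
    apply le_antisymm
    · exact Nat.sInf_le (show N ∈ {m | H.HasIncidenceColoring m} from hcol)
    · exact hlow _ (Nat.sInf_mem (⟨N, hcol⟩ : Set.Nonempty {m | H.HasIncidenceColoring m}))
  omega
end
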